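/- arXiv:1508.00818 — 7 statements merged into one kernel-verified Lean document; each statement's English description precedes it below -/
import Mathlib

section
/- If f : ℝ → ℝ and g : ℝ → ℝ are both pseudo almost periodic, then the pointwise product f·g is pseudo almost periodic. -/
/-- A function `g : ℝ → ℝ` is (Bohr) almost periodic if it is continuous and for every
`ε > 0` there exists `l > 0` such that every interval of length `l` contains a number `τ`
with `|g (t + τ) - g t| < ε` for all `t`. -/
def AlmostPeriodic (g : ℝ → ℝ) : Prop :=
  Continuous g ∧ ∀ ε : ℝ, 0 < ε → ∃ l : ℝ, 0 < l ∧ ∀ a : ℝ,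
    ∃ τ ∈ Set.Icc a (a + l), ∀ t : ℝ, |g (t + τ) - g t| < ε

/-- `φ : ℝ → ℝ` belongs to `PAP₀(ℝ)` if it is bounded, continuous and
`(1/(2r)) ∫_{-r}^{r} |φ(s)| ds → 0` as `r → ∞`. -/
def PAPZero (φ : ℝ → ℝ) : Prop :=
  (∃ C : ℝ, ∀ t : ℝ, |φ t| ≤ C) ∧ Continuous φ ∧
    Filter.Tendsto (fun r : ℝ => (1 / (2 * r)) * ∫ s in (-r)..r, |φ s|)
      Filter.atTop (nhds 0)

/-- `f : ℝ → ℝ` is pseudo almost periodic if `f = g + φ` with `g` almost periodic and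
`φ ∈ PAP₀(ℝ)`. -/
def PseudoAlmostPeriodic (f : ℝ → ℝ) : Prop :=
  ∃ g φ : ℝ → ℝ, AlmostPeriodic g ∧ PAPZero φ ∧ f = g + φ


lemma ap_bounded {g : ℝ → ℝ} (h : AlmostPeriodic g) : ∃ C : ℝ, ∀ t : ℝ, |g t| ≤ C := by
  obtain ⟨l, hl, H⟩ := h.2 1 one_pos
  obtain ⟨C, hC⟩ := (isCompact_Icc (a := (0:ℝ)) (b := l)).exists_bound_of_continuousOn
    h.1.continuousOn
  refine ⟨C + 1, fun t => ?_⟩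
  obtain ⟨τ, hτ, ht⟩ := H (-t)
  have h1 : t + τ ∈ Set.Icc (0:ℝ) l := by
    constructor <;> [linarith [hτ.1]; linarith [hτ.2]]
  have := hC (t + τ) h1
  have h2 := ht t
  rw [Real.norm_eq_abs] at this
  have : |g t| ≤ |g (t + τ)| + |g (t + τ) - g t| := by
    have := abs_sub_abs_le_abs_sub (g t) (g (t + τ))
    rw [abs_sub_comm] at this
    linarith [abs_sub_abs_le_abs_sub (g t) (g (t + τ)), abs_nonneg (g (t+τ) - g t)]
  calc |g t| ≤ |g (t + τ)| + |g (t + τ) - g t| := this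
    _ ≤ C + 1 := by
        have h3 := hC (t + τ) h1; rw [Real.norm_eq_abs] at h3; linarith

lemma ap_uc {g : ℝ → ℝ} (h : AlmostPeriodic g) {ε : ℝ} (hε : 0 < ε) :
    ∃ δ : ℝ, 0 < δ ∧ ∀ a b : ℝ, |a - b| < δ → |g a - g b| < ε := by
  obtain ⟨l, hl, H⟩ := h.2 (ε/3) (by linarith)
  have huc := (isCompact_Icc (a := (-1:ℝ)) (b := l+1)).uniformContinuousOn_of_continuous
    h.1.continuousOn
  rw [Metric.uniformContinuousOn_iff] at huc
  obtain ⟨δ, hδ, hδ'⟩ := huc (ε/3) (by linarith)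
  refine ⟨min δ 1, lt_min hδ one_pos, fun a b hab => ?_⟩
  obtain ⟨τ, hτ, ht⟩ := H (-b)
  have hb : b + τ ∈ Set.Icc (-1:ℝ) (l+1) := by
    constructor <;> [linarith [hτ.1]; linarith [hτ.2]]
  have habs : |a - b| < 1 := lt_of_lt_of_le hab (min_le_right _ _)
  have ha : a + τ ∈ Set.Icc (-1:ℝ) (l+1) := by
    have := abs_lt.mp habs
    constructor <;> [linarith [hτ.1, this.1]; linarith [hτ.2, this.2]]
  have hd : dist (a + τ) (b + τ) < δ := by
    rw [Real.dist_eq]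
    have : a + τ - (b + τ) = a - b := by ring
    rw [this]
    exact lt_of_lt_of_le hab (min_le_left _ _)
  have h2 := hδ' (a + τ) ha (b + τ) hb hd
  rw [Real.dist_eq] at h2
  have h3 := ht a
  have h4 := ht b
  have : g a - g b = -(g (a + τ) - g a) + (g (a + τ) - g (b + τ)) + (g (b + τ) - g b) := by ring
  calc |g a - g b| ≤ |g (a+τ) - g a| + |g (a+τ) - g (b+τ)| + |g (b+τ) - g b| := by
        rw [this]
        refine (abs_add_le _ _).trans ?_
        have := abs_add_le (-(g (a + τ) - g a)) (g (a + τ) - g (b + τ))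
        rw [abs_neg] at this
        linarith
    _ < ε := by linarith

lemma ap_net {g : ℝ → ℝ} (h : AlmostPeriodic g) {ε : ℝ} (hε : 0 < ε) :
    ∃ S : Finset ℝ, ∀ s : ℝ, ∃ u ∈ S, ∀ t : ℝ, |g (t + s) - g (t + u)| ≤ ε := by
  obtain ⟨l, hl, H⟩ := h.2 (ε/2) (by linarith)
  obtain ⟨δ, hδ, hδ'⟩ := ap_uc h (show (0:ℝ) < ε/2 by linarith)
  set n : ℕ := ⌊l / δ⌋₊ with hn
  refine ⟨(Finset.range (n+1)).image (fun k : ℕ => -l + k * δ), fun s => ?_⟩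
  obtain ⟨τ, hτ, ht⟩ := H s
  set u : ℝ := s - τ with hu
  have hu1 : -l ≤ u := by simp only [hu]; linarith [hτ.2]
  have hu2 : u ≤ 0 := by simp only [hu]; linarith [hτ.1]
  set k : ℕ := ⌊(u + l) / δ⌋₊ with hk
  have hul : 0 ≤ u + l := by linarith
  have hk1 : (k : ℝ) * δ ≤ u + l := by
    have := Nat.floor_le (div_nonneg hul hδ.le)
    calc (k:ℝ) * δ ≤ ((u+l)/δ) * δ := by nlinarith
      _ = u + l := div_mul_cancel₀ _ hδ.ne'
  have hk2 : u + l < (k + 1 : ℝ) * δ := by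
    have := Nat.lt_floor_add_one ((u+l)/δ)
    calc u + l = ((u+l)/δ) * δ := (div_mul_cancel₀ _ hδ.ne').symm
      _ < (k + 1 : ℝ) * δ := by nlinarith
  have hkn : k ≤ n := by
    apply Nat.floor_le_floor
    gcongr
    linarith
  refine ⟨-l + k * δ, Finset.mem_image.mpr ⟨k, Finset.mem_range.mpr (by omega), rfl⟩, fun t => ?_⟩
  have h1 : |g (t + s) - g (t + u)| < ε/2 := by
    have := ht (t + u)
    have heq : t + u + τ = t + s := by simp only [hu]; ring
    rwa [heq] at this
  have h2 : |g (t + u) - g (t + (-l + k * δ))| < ε/2 := by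
    apply hδ'
    have : t + u - (t + (-l + k * δ)) = u + l - k * δ := by ring
    rw [this, abs_of_nonneg (by linarith)]
    linarith
  calc |g (t + s) - g (t + (-l + k * δ))|
      ≤ |g (t + s) - g (t + u)| + |g (t + u) - g (t + (-l + k * δ))| := abs_sub_le _ _ _
    _ ≤ ε := by linarith

lemma ap_common {g₁ g₂ : ℝ → ℝ} (h₁ : AlmostPeriodic g₁) (h₂ : AlmostPeriodic g₂)
    {ε : ℝ} (hε : 0 < ε) :
    ∃ l : ℝ, 0 < l ∧ ∀ a : ℝ, ∃ τ ∈ Set.Icc a (a + l),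
      ∀ t : ℝ, |g₁ (t + τ) - g₁ t| < ε ∧ |g₂ (t + τ) - g₂ t| < ε := by
  obtain ⟨S₁, hS₁⟩ := ap_net h₁ (show (0:ℝ) < ε/4 by linarith)
  obtain ⟨S₂, hS₂⟩ := ap_net h₂ (show (0:ℝ) < ε/4 by linarith)
  classical
  set P : ℝ → ℝ → ℝ → Prop := fun u v s =>
    (∀ t : ℝ, |g₁ (t + s) - g₁ (t + u)| ≤ ε/4) ∧ (∀ t : ℝ, |g₂ (t + s) - g₂ (t + v)| ≤ ε/4)
    with hP
  set F : ℝ → ℝ → ℝ := fun u v => if h : ∃ s, P u v s then h.choose else 0 with hF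
  set R : Finset ℝ := (S₁ ×ˢ S₂).image (fun p => F p.1 p.2) with hR
  obtain ⟨M, hM⟩ := (R.image (fun r => |r|)).exists_le
  have hM' : ∀ r ∈ R, |r| ≤ M := fun r hr =>
    hM _ (Finset.mem_image.mpr ⟨r, hr, rfl⟩)
  have hM0 : 0 ≤ M ∨ True := Or.inr trivial
  refine ⟨2 * (|M| + 1), by positivity, fun a => ?_⟩
  set s : ℝ := a + (|M| + 1) with hs
  obtain ⟨u, hu, hu'⟩ := hS₁ s
  obtain ⟨v, hv, hv'⟩ := hS₂ s
  have hex : ∃ s', P u v s' := ⟨s, hu', hv'⟩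
  set r : ℝ := F u v with hr
  have hPr : P u v r := by
    simp only [hr, hF, dif_pos hex]
    exact hex.choose_spec
  have hrR : r ∈ R := Finset.mem_image.mpr ⟨(u, v), Finset.mem_product.mpr ⟨hu, hv⟩, rfl⟩
  have hrM : |r| ≤ |M| := (hM' r hrR).trans (le_abs_self M)
  have hrM' := abs_le.mp hrM
  refine ⟨s - r, ⟨by simp only [hs]; linarith [hrM'.2], by simp only [hs]; linarith [hrM'.1]⟩,
    fun t => ?_⟩
  constructor
  · have ha := hu' (t - r)
    have hb := hPr.1 (t - r)
    have e1 : t - r + s = t + (s - r) := by ring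
    have e2 : t - r + r = t := by ring
    rw [e1] at ha
    rw [e2] at hb
    have : |g₁ (t + (s - r)) - g₁ t| ≤ |g₁ (t + (s-r)) - g₁ (t - r + u)| + |g₁ t - g₁ (t - r + u)| := by
      have := abs_sub_le (g₁ (t + (s-r))) (g₁ (t - r + u)) (g₁ t)
      rw [abs_sub_comm (g₁ (t - r + u)) (g₁ t)] at this
      exact this
    linarith
  · have ha := hv' (t - r)
    have hb := hPr.2 (t - r)
    have e1 : t - r + s = t + (s - r) := by ring
    have e2 : t - r + r = t := by ring
    rw [e1] at ha
    rw [e2] at hb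
    have : |g₂ (t + (s - r)) - g₂ t| ≤ |g₂ (t + (s-r)) - g₂ (t - r + v)| + |g₂ t - g₂ (t - r + v)| := by
      have := abs_sub_le (g₂ (t + (s-r))) (g₂ (t - r + v)) (g₂ t)
      rw [abs_sub_comm (g₂ (t - r + v)) (g₂ t)] at this
      exact this
    linarith

lemma ap_mul {g₁ g₂ : ℝ → ℝ} (h₁ : AlmostPeriodic g₁) (h₂ : AlmostPeriodic g₂) :
    AlmostPeriodic (fun t => g₁ t * g₂ t) := by
  refine ⟨h₁.1.mul h₂.1, fun ε hε => ?_⟩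
  obtain ⟨C₁, hC₁⟩ := ap_bounded h₁
  obtain ⟨C₂, hC₂⟩ := ap_bounded h₂
  set C : ℝ := max C₁ C₂ + 1 with hC
  have hC0 : 0 < C := by
    have := (abs_nonneg (g₁ 0)).trans ((hC₁ 0).trans (le_max_left C₁ C₂))
    simp only [hC]; linarith
  have hC₁' : ∀ t, |g₁ t| ≤ C := fun t => (hC₁ t).trans (by simp [hC]; linarith [le_max_left C₁ C₂])
  have hC₂' : ∀ t, |g₂ t| ≤ C := fun t => (hC₂ t).trans (by simp [hC]; linarith [le_max_right C₁ C₂])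
  obtain ⟨l, hl, H⟩ := ap_common h₁ h₂ (show (0:ℝ) < ε / (2 * C + 1) by positivity)
  refine ⟨l, hl, fun a => ?_⟩
  obtain ⟨τ, hτ, ht⟩ := H a
  refine ⟨τ, hτ, fun t => ?_⟩
  obtain ⟨e1, e2⟩ := ht t
  have key : g₁ (t+τ) * g₂ (t+τ) - g₁ t * g₂ t
      = g₁ (t+τ) * (g₂ (t+τ) - g₂ t) + g₂ t * (g₁ (t+τ) - g₁ t) := by ring
  calc |g₁ (t+τ) * g₂ (t+τ) - g₁ t * g₂ t|
      ≤ |g₁ (t+τ)| * |g₂ (t+τ) - g₂ t| + |g₂ t| * |g₁ (t+τ) - g₁ t| := by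
        rw [key]
        refine (abs_add_le _ _).trans ?_
        rw [abs_mul, abs_mul]
    _ ≤ C * (ε / (2*C+1)) + C * (ε / (2*C+1)) := by
        have b1 := hC₁' (t+τ); have b2 := hC₂' t
        have n1 := abs_nonneg (g₂ (t+τ) - g₂ t); have n2 := abs_nonneg (g₁ (t+τ) - g₁ t)
        have n3 := abs_nonneg (g₁ (t+τ)); have n4 := abs_nonneg (g₂ t)
        nlinarith
    _ < ε := by
        rw [div_eq_inv_mul]
        have h1 : (2*C+1)⁻¹ * ε * (2*C+1) = ε := by field_simp
        nlinarith [mul_pos (inv_pos.mpr (show (0:ℝ) < 2*C+1 by linarith)) hε]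

lemma papzero_mul {φ h : ℝ → ℝ} (hφ : PAPZero φ) (hcont : Continuous h)
    (C : ℝ) (hCb : ∀ t, |h t| ≤ C) : PAPZero (fun t => h t * φ t) := by
  obtain ⟨⟨K, hK⟩, hφc, hφt⟩ := hφ
  have hC0 : 0 ≤ C := (abs_nonneg (h 0)).trans (hCb 0)
  refine ⟨⟨C * K, fun t => ?_⟩, hcont.mul hφc, ?_⟩
  · rw [abs_mul]
    exact mul_le_mul (hCb t) (hK t) (abs_nonneg _) hC0
  · apply tendsto_of_tendsto_of_tendsto_of_le_of_le'
      (tendsto_const_nhds (x := (0:ℝ)))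
      (show Filter.Tendsto (fun r : ℝ => C * ((1 / (2 * r)) * ∫ s in (-r)..r, |φ s|))
          Filter.atTop (nhds 0) by
        simpa using hφt.const_mul C)
    · filter_upwards [Filter.eventually_gt_atTop (0:ℝ)] with r hr
      apply mul_nonneg (by positivity)
      apply intervalIntegral.integral_nonneg (by linarith) (fun s _ => abs_nonneg _)
    · filter_upwards [Filter.eventually_gt_atTop (0:ℝ)] with r hr
      have hint1 : IntervalIntegrable (fun s => |h s * φ s|) MeasureTheory.volume (-r) r :=
        ((hcont.mul hφc).abs).intervalIntegrable _ _
      have hint2 : IntervalIntegrable (fun s => C * |φ s|) MeasureTheory.volume (-r) r :=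
        (continuous_const.mul hφc.abs).intervalIntegrable _ _
      have hmono : ∫ s in (-r)..r, |h s * φ s| ≤ ∫ s in (-r)..r, C * |φ s| := by
        apply intervalIntegral.integral_mono_on (by linarith) hint1 hint2
        intro s _
        rw [abs_mul]
        exact mul_le_mul_of_nonneg_right (hCb s) (abs_nonneg _)
      have hpos : (0:ℝ) ≤ 1 / (2 * r) := by positivity
      calc (1 / (2 * r)) * ∫ s in (-r)..r, |h s * φ s|
          ≤ (1 / (2 * r)) * ∫ s in (-r)..r, C * |φ s| := by
            exact mul_le_mul_of_nonneg_left hmono hpos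
        _ = C * ((1 / (2 * r)) * ∫ s in (-r)..r, |φ s|) := by
            rw [intervalIntegral.integral_const_mul]; ring

lemma papzero_add {φ ψ : ℝ → ℝ} (hφ : PAPZero φ) (hψ : PAPZero ψ) :
    PAPZero (fun t => φ t + ψ t) := by
  obtain ⟨⟨K₁, hK₁⟩, hc₁, ht₁⟩ := hφ
  obtain ⟨⟨K₂, hK₂⟩, hc₂, ht₂⟩ := hψ
  refine ⟨⟨K₁ + K₂, fun t => (abs_add_le _ _).trans (add_le_add (hK₁ t) (hK₂ t))⟩,
    hc₁.add hc₂, ?_⟩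
  apply tendsto_of_tendsto_of_tendsto_of_le_of_le'
    (tendsto_const_nhds (x := (0:ℝ)))
    (show Filter.Tendsto (fun r : ℝ => (1 / (2 * r)) * (∫ s in (-r)..r, |φ s|)
        + (1 / (2 * r)) * (∫ s in (-r)..r, |ψ s|)) Filter.atTop (nhds 0) by
      simpa using ht₁.add ht₂)
  · filter_upwards [Filter.eventually_gt_atTop (0:ℝ)] with r hr
    apply mul_nonneg (by positivity)
    apply intervalIntegral.integral_nonneg (by linarith) (fun s _ => abs_nonneg _)
  · filter_upwards [Filter.eventually_gt_atTop (0:ℝ)] with r hr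
    have hint1 : IntervalIntegrable (fun s => |φ s + ψ s|) MeasureTheory.volume (-r) r :=
      ((hc₁.add hc₂).abs).intervalIntegrable _ _
    have hint2 : IntervalIntegrable (fun s => |φ s| + |ψ s|) MeasureTheory.volume (-r) r :=
      (hc₁.abs.add hc₂.abs).intervalIntegrable _ _
    have hmono : ∫ s in (-r)..r, |φ s + ψ s| ≤ ∫ s in (-r)..r, (|φ s| + |ψ s|) :=
      intervalIntegral.integral_mono_on (by linarith) hint1 hint2
        (fun s _ => abs_add_le _ _)
    have hsplit : ∫ s in (-r)..r, (|φ s| + |ψ s|)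
        = (∫ s in (-r)..r, |φ s|) + ∫ s in (-r)..r, |ψ s| :=
      intervalIntegral.integral_add (hc₁.abs.intervalIntegrable _ _)
        (hc₂.abs.intervalIntegrable _ _)
    have hpos : (0:ℝ) ≤ 1 / (2 * r) := by positivity
    calc (1 / (2 * r)) * ∫ s in (-r)..r, |φ s + ψ s|
        ≤ (1 / (2 * r)) * ∫ s in (-r)..r, (|φ s| + |ψ s|) :=
          mul_le_mul_of_nonneg_left hmono hpos
      _ = (1 / (2 * r)) * (∫ s in (-r)..r, |φ s|) + (1 / (2 * r)) * (∫ s in (-r)..r, |ψ s|) := by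
          rw [hsplit]; ring

/-- The pointwise product of two pseudo almost periodic functions is
pseudo almost periodic. -/
theorem stmt3 (f g : ℝ → ℝ) (hf : PseudoAlmostPeriodic f) (hg : PseudoAlmostPeriodic g) :
    PseudoAlmostPeriodic (fun t => f t * g t) := by
  obtain ⟨G₁, φ₁, hG₁, hφ₁, hf'⟩ := hf
  obtain ⟨G₂, φ₂, hG₂, hφ₂, hg'⟩ := hg
  obtain ⟨C₁, hC₁⟩ := ap_bounded hG₁
  obtain ⟨C₂, hC₂⟩ := ap_bounded hG₂
  obtain ⟨K₂, hK₂⟩ := hφ₂.1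
  refine ⟨fun t => G₁ t * G₂ t,
    fun t => G₁ t * φ₂ t + (G₂ t + φ₂ t) * φ₁ t,
    ap_mul hG₁ hG₂, ?_, ?_⟩
  · exact papzero_add (papzero_mul hφ₂ hG₁.1 C₁ hC₁)
      (papzero_mul hφ₁ (hG₂.1.add hφ₂.2.1) (C₂ + K₂)
        (fun t => (abs_add_le _ _).trans (add_le_add (hC₂ t) (hK₂ t))))
  · funext t
    have h1 : f t = G₁ t + φ₁ t := by rw [hf']; rfl
    have h2 : g t = G₂ t + φ₂ t := by rw [hg']; rfl
    simp only [Pi.add_apply]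
    rw [h1, h2]; ring
end

section
/- Let c : ℝ → ℝ be a bounded continuous (Bohr) almost periodic function and suppose there is m > 0 such that (1/T) ∫_{t}^{t+T} c(s) ds → m as T → ∞, uniformly in t ∈ ℝ. Then there exist constants K ≥ 1 and α > 0 such that for all real numbers s ≤ t, exp(−∫_{s}^{t} c(u) du) ≤ K · exp(−α (t − s)). In other words, the scalar linear equation x′ = −c(t)x admits an exponential dichotomy on ℝ. -/
/-- If `c : ℝ → ℝ` is a bounded continuous almost periodic function whose
mean value `(1/T) ∫_t^{t+T} c` converges to some `m > 0` as `T → ∞`, uniformly in `t`, then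
there are `K ≥ 1` and `α > 0` with `exp(-∫_s^t c) ≤ K · exp(-α (t - s))` for all `s ≤ t`;
i.e. `x' = -c(t) x` admits an exponential dichotomy on `ℝ`. -/
theorem stmt8 (c : ℝ → ℝ) (hb : ∃ C : ℝ, ∀ t : ℝ, |c t| ≤ C)
    (hc : AlmostPeriodic c) (m : ℝ) (hm : 0 < m)
    (hmean : ∀ ε : ℝ, 0 < ε → ∃ T₀ : ℝ, 0 < T₀ ∧ ∀ T : ℝ, T₀ ≤ T →
      ∀ t : ℝ, |(1 / T) * (∫ s in t..(t + T), c s) - m| < ε) :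
    ∃ K : ℝ, 1 ≤ K ∧ ∃ α : ℝ, 0 < α ∧ ∀ s t : ℝ, s ≤ t →
      Real.exp (-∫ u in s..t, c u) ≤ K * Real.exp (-α * (t - s)) := by

  obtain ⟨C, hC⟩ := hb
  have hC0 : 0 ≤ C := le_trans (abs_nonneg _) (hC 0)
  obtain ⟨T₀, hT₀, hT⟩ := hmean (m/2) (by linarith)
  have hcont := hc.1
  have hint : ∀ a b : ℝ, IntervalIntegrable c MeasureTheory.volume a b :=
    fun a b => hcont.intervalIntegrable a b
  have key : ∀ t : ℝ, (m/2) * T₀ ≤ ∫ s in t..(t+T₀), c s := by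
    intro t
    have h := abs_lt.1 (hT T₀ le_rfl t)
    have h1 : m/2 < (1/T₀) * ∫ s in t..(t+T₀), c s := by linarith [h.1]
    have h2 := mul_lt_mul_of_pos_right h1 hT₀
    have h3 : (1/T₀) * (∫ s in t..(t+T₀), c s) * T₀ = ∫ s in t..(t+T₀), c s := by
      field_simp
    linarith [h3 ▸ h2]
  have step : ∀ n : ℕ, ∀ t : ℝ, (m/2) * (n * T₀) ≤ ∫ s in t..(t + n * T₀), c s := by
    intro n
    induction n with
    | zero => intro t; simp
    | succ n ih =>
      intro t
      push_cast
      rw [show t + ((n:ℝ)+1)*T₀ = (t + (n:ℝ)*T₀) + T₀ from by ring]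
      have hadd : (∫ s in t..(t + (n:ℝ)*T₀), c s)
            + (∫ s in (t+(n:ℝ)*T₀)..((t + (n:ℝ)*T₀) + T₀), c s)
          = ∫ s in t..((t + (n:ℝ)*T₀) + T₀), c s :=
        intervalIntegral.integral_add_adjacent_intervals (hint _ _) (hint _ _)
      rw [← hadd]
      nlinarith [ih t, key (t + (n:ℝ)*T₀)]
  refine ⟨Real.exp ((m/2 + C) * T₀), Real.one_le_exp (by positivity), m/2, by linarith, ?_⟩
  intro s t hst
  set n := ⌊(t - s)/T₀⌋₊ with hn
  have hn1 : (n : ℝ) * T₀ ≤ t - s := by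
    rw [← le_div_iff₀ hT₀]
    exact Nat.floor_le (div_nonneg (by linarith) hT₀.le)
  have hn2 : t - s < ((n : ℝ) + 1) * T₀ := by
    rw [← div_lt_iff₀ hT₀]
    exact Nat.lt_floor_add_one _
  have hadd : (∫ u in s..(s + n*T₀), c u) + (∫ u in (s + n*T₀)..t, c u)
      = ∫ u in s..t, c u :=
    intervalIntegral.integral_add_adjacent_intervals (hint _ _) (hint _ _)
  have h1 : (m/2) * (n * T₀) ≤ ∫ u in s..(s + n*T₀), c u := step n s
  have h2 : |∫ u in (s + n*T₀)..t, c u| ≤ C * T₀ := by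
    have hb : ‖∫ u in (s + n*T₀)..t, c u‖ ≤ C * |t - (s + n*T₀)| :=
      intervalIntegral.norm_integral_le_of_norm_le_const (fun x _ => hC x)
    have habs : |t - (s + n*T₀)| ≤ T₀ := by
      rw [abs_le]; constructor <;> nlinarith
    calc |∫ u in (s + n*T₀)..t, c u| ≤ C * |t - (s + n*T₀)| := hb
      _ ≤ C * T₀ := by nlinarith [abs_nonneg (t - (s + n*T₀))]
  have h2' : -(C * T₀) ≤ ∫ u in (s + n*T₀)..t, c u := neg_le_of_abs_le h2
  have hmain : (m/2) * (t - s) - (m/2 + C) * T₀ ≤ ∫ u in s..t, c u := by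
    rw [← hadd]; nlinarith
  have : -(∫ u in s..t, c u) ≤ (m/2 + C) * T₀ + (-(m/2) * (t - s)) := by linarith
  calc Real.exp (-∫ u in s..t, c u)
      ≤ Real.exp ((m/2 + C) * T₀ + (-(m/2) * (t - s))) := Real.exp_le_exp.2 this
    _ = Real.exp ((m/2 + C) * T₀) * Real.exp (-(m/2) * (t - s)) := Real.exp_add _ _
end

section
/- Let c : ℤ → ℝ be a bounded sequence with c(t) ≥ 0 for all t ∈ ℤ, and suppose there is m > 0 such that (1/T) Σ_{s=t+1}^{t+T} c(s) → m as T → ∞ (T ∈ ℕ), uniformly in t ∈ ℤ. Then there exist constants K ≥ 1 and η ∈ (0,1) such that for all integers s ≤ t, ∏_{u=s+1}^{t} (1 + c(u))^{−1} ≤ K · η^{t−s}. In other words, the scalar linear difference equation x(t) − x(t−1) = −c(t)x(t) admits an exponential dichotomy on ℤ. -/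
lemma aux_one_add_sum_le_prod {ι : Type*} (s : Finset ι) (f : ι → ℝ)
    (hf : ∀ i ∈ s, 0 ≤ f i) : 1 + ∑ i ∈ s, f i ≤ ∏ i ∈ s, (1 + f i) := by
  induction s using Finset.cons_induction with
  | empty => simp
  | cons a s ha ih =>
    rw [Finset.sum_cons, Finset.prod_cons]
    have h0 : 0 ≤ f a := hf a (Finset.mem_cons_self a s)
    have hs : ∀ i ∈ s, 0 ≤ f i := fun i hi => hf i (Finset.mem_cons_of_mem hi)
    have h1 : 1 + ∑ i ∈ s, f i ≤ ∏ i ∈ s, (1 + f i) := ih hs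
    nlinarith [Finset.sum_nonneg hs]

/-- Integer case of the exponential-dichotomy lemma: if `c : ℤ → ℝ` is a
bounded nonnegative sequence whose mean `(1/T) ∑_{s=t+1}^{t+T} c s` converges to some
`m > 0` as `T → ∞`, uniformly in `t`, then there are `K ≥ 1` and `η ∈ (0,1)` with
`∏_{u=s+1}^{t} (1 + c u)⁻¹ ≤ K · η^{t-s}` for all integers `s ≤ t`; i.e. the difference
equation `x(t) - x(t-1) = -c(t) x(t)` admits an exponential dichotomy on `ℤ`. -/
theorem stmt9 (c : ℤ → ℝ) (hb : ∃ C : ℝ, ∀ t : ℤ, |c t| ≤ C)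
    (hpos : ∀ t : ℤ, 0 ≤ c t) (m : ℝ) (hm : 0 < m)
    (hmean : ∀ ε : ℝ, 0 < ε → ∃ T₀ : ℕ, 0 < T₀ ∧ ∀ T : ℕ, T₀ ≤ T →
      ∀ t : ℤ, |(1 / (T : ℝ)) * (∑ s ∈ Finset.Icc (t + 1) (t + T), c s) - m| < ε) :
    ∃ K : ℝ, 1 ≤ K ∧ ∃ η : ℝ, 0 < η ∧ η < 1 ∧ ∀ s t : ℤ, s ≤ t →
      (∏ u ∈ Finset.Icc (s + 1) t, (1 + c u)⁻¹) ≤ K * η ^ (t - s).toNat := by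
  obtain ⟨T₀, hT₀, hT⟩ := hmean (m / 2) (by linarith)
  set S : ℝ := (T₀ : ℝ) * m / 2 with hS
  have hT₀R : (0 : ℝ) < T₀ := by exact_mod_cast hT₀
  have hSpos : 0 < S := by positivity
  set ρ : ℝ := (1 + S)⁻¹ with hρ
  have hρpos : 0 < ρ := by positivity
  have hρlt : ρ < 1 := by
    rw [hρ, inv_lt_one_iff₀]; right; linarith
  -- positivity of factors
  have hfac : ∀ u : ℤ, 0 < 1 + c u := fun u => by have := hpos u; linarith
  have hfacinv : ∀ u : ℤ, (1 + c u)⁻¹ ≤ 1 := fun u => by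
    rw [inv_le_one_iff₀]; right; have := hpos u; linarith
  -- block sum lower bound
  have hblocksum : ∀ t : ℤ, S ≤ ∑ u ∈ Finset.Icc (t + 1) (t + T₀), c u := by
    intro t
    have h := hT T₀ le_rfl t
    have h2 : m / 2 < (1 / (T₀ : ℝ)) * ∑ u ∈ Finset.Icc (t + 1) (t + T₀), c u := by
      have := abs_lt.1 h; linarith [this.1]
    have h3 : (T₀ : ℝ) * (m / 2) < ∑ u ∈ Finset.Icc (t + 1) (t + T₀), c u := by
      rw [one_div] at h2
      calc (T₀ : ℝ) * (m / 2) < (T₀ : ℝ) * ((T₀ : ℝ)⁻¹ * ∑ u ∈ Finset.Icc (t + 1) (t + T₀), c u) :=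
            by exact (mul_lt_mul_iff_right₀ hT₀R).2 h2
        _ = ∑ u ∈ Finset.Icc (t + 1) (t + T₀), c u := by field_simp
    rw [hS]; linarith
  -- block product bound
  have hIccIoc : ∀ s t : ℤ, Finset.Icc (s + 1) t = Finset.Ioc s t := by
    intro s t; ext x; simp [Int.add_one_le_iff]
  have hblock : ∀ t : ℤ, (∏ u ∈ Finset.Ioc t (t + T₀), (1 + c u)⁻¹) ≤ ρ := by
    intro t
    rw [← hIccIoc, Finset.prod_inv_distrib]
    have h1 : 1 + S ≤ ∏ u ∈ Finset.Icc (t + 1) (t + T₀), (1 + c u) := by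
      calc 1 + S ≤ 1 + ∑ u ∈ Finset.Icc (t + 1) (t + T₀), c u := by linarith [hblocksum t]
        _ ≤ _ := aux_one_add_sum_le_prod _ _ (fun i _ => hpos i)
    rw [hρ]
    exact inv_anti₀ (by linarith) h1
  have hprodpos : ∀ (F : Finset ℤ), 0 < ∏ u ∈ F, (1 + c u)⁻¹ :=
    fun F => Finset.prod_pos (fun u _ => inv_pos.2 (hfac u))
  have hprodle1 : ∀ (F : Finset ℤ), (∏ u ∈ F, (1 + c u)⁻¹) ≤ 1 :=
    fun F => Finset.prod_le_one (fun u _ => le_of_lt (inv_pos.2 (hfac u)))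
      (fun u _ => hfacinv u)
  -- key induction
  have key : ∀ n : ℕ, ∀ s : ℤ,
      (∏ u ∈ Finset.Ioc s (s + n), (1 + c u)⁻¹) ≤ ρ ^ (n / T₀) := by
    intro n
    induction n using Nat.strong_induction_on with
    | _ n ih =>
      intro s
      by_cases hn : n < T₀
      · rw [Nat.div_eq_of_lt hn, pow_zero]
        exact hprodle1 _
      · push_neg at hn
        have hcast : (T₀ : ℤ) ≤ (n : ℤ) := by exact_mod_cast hn
        have hsplit : (∏ u ∈ Finset.Ioc s (s + T₀), (1 + c u)⁻¹) *
            (∏ u ∈ Finset.Ioc (s + T₀) (s + n), (1 + c u)⁻¹) =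
            ∏ u ∈ Finset.Ioc s (s + n), (1 + c u)⁻¹ :=
          by
            rw [← Finset.prod_union (by
              simp only [Finset.disjoint_left, Finset.mem_Ioc]
              intro x h1 h2; omega),
              Finset.Ioc_union_Ioc_eq_Ioc (by linarith [Int.ofNat_nonneg T₀]) (by linarith)]
        rw [← hsplit]
        have hdiv : n / T₀ = (n - T₀) / T₀ + 1 := Nat.div_eq_sub_div hT₀ hn
        have h2 : (∏ u ∈ Finset.Ioc (s + T₀) (s + n), (1 + c u)⁻¹) ≤ ρ ^ ((n - T₀) / T₀) := by
          have := ih (n - T₀) (by omega) (s + T₀)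
          have heq : s + (T₀ : ℤ) + ((n - T₀ : ℕ) : ℤ) = s + n := by
            push_cast [Nat.cast_sub hn]; ring
          rwa [heq] at this
        calc (∏ u ∈ Finset.Ioc s (s + T₀), (1 + c u)⁻¹) *
            (∏ u ∈ Finset.Ioc (s + T₀) (s + n), (1 + c u)⁻¹)
            ≤ ρ * ρ ^ ((n - T₀) / T₀) :=
              mul_le_mul (hblock s) h2 (le_of_lt (hprodpos _)) (le_of_lt hρpos)
          _ = ρ ^ (n / T₀) := by rw [hdiv, pow_succ]; ring
  -- assemble
  refine ⟨1 + S, by linarith, ρ ^ ((T₀ : ℝ)⁻¹), ?_, ?_, ?_⟩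
  · positivity
  · exact Real.rpow_lt_one (le_of_lt hρpos) hρlt (by positivity)
  · intro s t hst
    set n : ℕ := (t - s).toNat with hn
    have ht : t = s + n := by rw [hn]; omega
    have h1 : (∏ u ∈ Finset.Icc (s + 1) t, (1 + c u)⁻¹) ≤ ρ ^ (n / T₀) := by
      rw [hIccIoc, ht]; exact key n s
    refine h1.trans ?_
    -- ρ ^ (n / T₀) ≤ (1 + S) * (ρ ^ (T₀⁻¹)) ^ n
    set q : ℕ := n / T₀
    have hq : (n : ℝ) * (T₀ : ℝ)⁻¹ ≤ (q : ℝ) + 1 := by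
      have hmod : T₀ * q + n % T₀ = n := Nat.div_add_mod n T₀
      have hmlt : n % T₀ < T₀ := Nat.mod_lt n hT₀
      have hnleN : n ≤ T₀ * q + T₀ := by omega
      have hnle : (n : ℝ) ≤ (q : ℝ) * T₀ + T₀ := by
        have := (Nat.cast_le (α := ℝ)).2 hnleN
        push_cast at this; linarith
      calc (n : ℝ) * (T₀ : ℝ)⁻¹ ≤ ((q : ℝ) * T₀ + T₀) * (T₀ : ℝ)⁻¹ :=
            mul_le_mul_of_nonneg_right hnle (by positivity)
        _ = (q : ℝ) + 1 := by field_simp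
    have hpow : ((ρ ^ ((T₀ : ℝ)⁻¹)) : ℝ) ^ n = ρ ^ ((T₀ : ℝ)⁻¹ * n) := by
      rw [← Real.rpow_natCast (ρ ^ ((T₀ : ℝ)⁻¹)) n, ← Real.rpow_mul (le_of_lt hρpos)]
    have hmono : ρ ^ ((q : ℝ) + 1) ≤ ρ ^ ((T₀ : ℝ)⁻¹ * (n : ℝ)) :=
      Real.rpow_le_rpow_of_exponent_ge hρpos (le_of_lt hρlt) (by rw [mul_comm]; exact hq)
    have hqpow : (ρ : ℝ) ^ q = ρ ^ ((q : ℝ)) := (Real.rpow_natCast ρ q).symm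
    have hsplit : ρ ^ ((q : ℝ) + 1) = ρ ^ ((q : ℝ)) * ρ := by
      rw [Real.rpow_add hρpos, Real.rpow_one]
    have hinv : ρ⁻¹ = 1 + S := by rw [hρ, inv_inv]
    calc ρ ^ q = ρ⁻¹ * ρ ^ ((q : ℝ) + 1) := by
          rw [hsplit, hqpow]; field_simp
      _ ≤ ρ⁻¹ * ρ ^ ((T₀ : ℝ)⁻¹ * (n : ℝ)) := by
          apply mul_le_mul_of_nonneg_left hmono (by positivity)
      _ = (1 + S) * (ρ ^ ((T₀ : ℝ)⁻¹)) ^ n := by rw [hinv, hpow]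
end

section
/- Let c : ℝ → ℝ be continuous with c⁻ := inf_{t∈ℝ} c(t) > 0, and let f : ℝ → ℝ be bounded and continuous. Then for every t ∈ ℝ the improper integral x(t) = ∫_{−∞}^{t} exp(−∫_{s}^{t} c(u) du) · f(s) ds converges absolutely, the function x is bounded with sup_t |x(t)| ≤ (sup_t |f(t)|)/c⁻, and x is differentiable on ℝ with x′(t) = −c(t)·x(t) + f(t) for all t ∈ ℝ. -/
open MeasureTheory

open Filter

lemma expMul_intervalIntegral (m : ℝ) (hm : 0 < m) (a b : ℝ) :
    ∫ x in a..b, Real.exp (m * x) = (Real.exp (m * b) - Real.exp (m * a)) / m := by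
  have h : ∀ x ∈ Set.uIcc a b, HasDerivAt (fun y => Real.exp (m * y) / m) (Real.exp (m * x)) x := by
    intro x _
    have h1 : HasDerivAt (fun y => Real.exp (m * y)) (Real.exp (m * x) * m) x :=
      ((hasDerivAt_id x).const_mul m).exp.congr_deriv (by simp [mul_comm])
    simpa [mul_div_assoc, mul_div_cancel_right₀ _ hm.ne'] using h1.div_const m
  rw [intervalIntegral.integral_eq_sub_of_hasDerivAt h
    ((Real.continuous_exp.comp (continuous_const.mul continuous_id)).intervalIntegrable a b)]
  ring

lemma expMul_integrableOn_Iic (m : ℝ) (hm : 0 < m) (t : ℝ) :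
    IntegrableOn (fun s => Real.exp (m * s)) (Set.Iic t) := by
  have hcont : Continuous fun s => Real.exp (m * s) :=
    Real.continuous_exp.comp (continuous_const.mul continuous_id)
  refine integrableOn_Iic_of_intervalIntegral_norm_bounded (Real.exp (m * t) / m) t
    (fun a : ℝ => hcont.integrableOn_Ioc) tendsto_id ?_
  filter_upwards with a
  have : ∀ x, ‖Real.exp (m * x)‖ = Real.exp (m * x) := fun x =>
    Real.norm_of_nonneg (Real.exp_pos _).le
  simp only [id_eq, this, expMul_intervalIntegral m hm]
  have := (Real.exp_pos (m * a)).le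
  have := hm
  gcongr
  linarith

lemma expMul_integral_Iic (m : ℝ) (hm : 0 < m) (t : ℝ) :
    ∫ s in Set.Iic t, Real.exp (m * s) = Real.exp (m * t) / m := by
  refine tendsto_nhds_unique
    (intervalIntegral_tendsto_integral_Iic t (expMul_integrableOn_Iic m hm t) tendsto_id) ?_
  have h1 : Tendsto (fun a : ℝ => Real.exp (m * a)) atBot (nhds 0) :=
    Real.tendsto_exp_atBot.comp (tendsto_id.const_mul_atBot hm)
  have : Tendsto (fun a : ℝ => (Real.exp (m * t) - Real.exp (m * a)) / m) atBot
      (nhds ((Real.exp (m * t) - 0) / m)) :=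
    ((tendsto_const_nhds.sub h1).div_const m)
  simpa [expMul_intervalIntegral m hm] using this

/-- If `c : ℝ → ℝ` is continuous with `c⁻ := inf c > 0` and `f` is bounded
and continuous, then `x t = ∫_{-∞}^{t} exp(-∫_s^t c) · f s ds` converges absolutely, `x` is
bounded by `(sup |f|)/c⁻`, and `x` is differentiable with `x' t = -c t · x t + f t`. -/
theorem stmt10 (c f : ℝ → ℝ) (hc : Continuous c) (hcinf : 0 < ⨅ t : ℝ, c t)
    (hfc : Continuous f) (hfb : ∃ C : ℝ, ∀ t : ℝ, |f t| ≤ C) :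
    (∀ t : ℝ, IntegrableOn (fun s : ℝ => Real.exp (-∫ u in s..t, c u) * f s) (Set.Iic t)) ∧
    (∀ t : ℝ, |∫ s in Set.Iic t, Real.exp (-∫ u in s..t, c u) * f s|
        ≤ (⨆ t' : ℝ, |f t'|) / ⨅ t' : ℝ, c t') ∧
    (∀ t : ℝ, HasDerivAt
        (fun t' : ℝ => ∫ s in Set.Iic t', Real.exp (-∫ u in s..t', c u) * f s)
        (-(c t) * (∫ s in Set.Iic t, Real.exp (-∫ u in s..t, c u) * f s) + f t) t) := by
  obtain ⟨C0, hC0⟩ := hfb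
  set m : ℝ := ⨅ t' : ℝ, c t' with hm_def
  have hm : 0 < m := hcinf
  have hbdd : BddBelow (Set.range c) := by
    by_contra h
    rw [hm_def, Real.iInf_of_not_bddBelow h] at hm
    exact lt_irrefl 0 hm
  have hcm : ∀ u, m ≤ c u := fun u => ciInf_le hbdd u
  set C : ℝ := ⨆ t' : ℝ, |f t'| with hC_def
  have hfC : ∀ t, |f t| ≤ C := fun t => le_ciSup ⟨C0, by rintro _ ⟨u, rfl⟩; exact hC0 u⟩ t
  -- antiderivative of c
  set F : ℝ → ℝ := fun t => ∫ u in (0:ℝ)..t, c u with hF_def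
  have hFderiv : ∀ t, HasDerivAt F (c t) t := fun t =>
    intervalIntegral.integral_hasDerivAt_right (hc.intervalIntegrable 0 t)
      (hc.stronglyMeasurableAtFilter _ _) hc.continuousAt
  have hFcont : Continuous F := by
    rw [continuous_iff_continuousAt]; exact fun t => (hFderiv t).continuousAt
  have hFst : ∀ s t : ℝ, (∫ u in s..t, c u) = F t - F s := by
    intro s t
    have h : (∫ u in s..(0:ℝ), c u) + (∫ u in (0:ℝ)..t, c u) = ∫ u in s..t, c u :=
      intervalIntegral.integral_add_adjacent_intervals
        (hc.intervalIntegrable s 0) (hc.intervalIntegrable 0 t)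
    rw [intervalIntegral.integral_symm 0 s] at h
    simp only [hF_def] at *
    linarith
  have hlow : ∀ s t : ℝ, s ≤ t → m * (t - s) ≤ ∫ u in s..t, c u := by
    intro s t hst
    have h := intervalIntegral.integral_mono_on hst ((intervalIntegrable_const : IntervalIntegrable (fun _ => m) MeasureTheory.volume s t))
      (hc.intervalIntegrable s t) (fun u _ => hcm u)
    simpa [mul_comm] using h
  -- continuity of the kernel
  have hker : ∀ t : ℝ, Continuous (fun s : ℝ => Real.exp (F s) * f s) :=
    fun t => (Real.continuous_exp.comp hFcont).mul hfc
  -- integrability of s ↦ exp (F s) * f s on Iic t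
  have hgint : ∀ t : ℝ, IntegrableOn (fun s : ℝ => Real.exp (F s) * f s) (Set.Iic t) := by
    intro t
    refine Integrable.mono' (g := fun s => (C * Real.exp (F t - m * t)) * Real.exp (m * s))
      (((expMul_integrableOn_Iic m hm t).const_mul _)) ((hker t).aestronglyMeasurable) ?_
    rw [ae_restrict_iff' measurableSet_Iic]
    filter_upwards with s hs
    have h1 : F s ≤ F t - m * (t - s) := by
      have := hlow s t hs
      rw [hFst s t] at this
      linarith
    have h2 : Real.exp (F s) ≤ Real.exp (F t - m * t) * Real.exp (m * s) := by
      rw [← Real.exp_add]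
      exact Real.exp_le_exp.2 (by linarith)
    have h3 : |f s| ≤ C := hfC s
    have h4 : (0:ℝ) ≤ C := (abs_nonneg _).trans h3
    calc ‖Real.exp (F s) * f s‖ = Real.exp (F s) * |f s| := by
          rw [norm_mul, Real.norm_of_nonneg (Real.exp_pos _).le, Real.norm_eq_abs]
      _ ≤ (Real.exp (F t - m * t) * Real.exp (m * s)) * C := by
          apply mul_le_mul h2 h3 (abs_nonneg _) (by positivity)
      _ = (C * Real.exp (F t - m * t)) * Real.exp (m * s) := by ring
  -- rewriting the integrand
  have hfun : ∀ t' : ℝ, (fun s : ℝ => Real.exp (-∫ u in s..t', c u) * f s)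
      = fun s : ℝ => Real.exp (-F t') * (Real.exp (F s) * f s) := by
    intro t'; funext s
    rw [hFst s t', neg_sub, Real.exp_sub, Real.exp_neg]
    field_simp
  set g : ℝ → ℝ := fun t' => ∫ s in Set.Iic t', Real.exp (F s) * f s with hg_def
  have hint : ∀ t : ℝ, IntegrableOn (fun s : ℝ => Real.exp (-∫ u in s..t, c u) * f s)
      (Set.Iic t) := by
    intro t
    rw [hfun t]
    exact (hgint t).const_mul _
  have hxval : ∀ t' : ℝ, (∫ s in Set.Iic t', Real.exp (-∫ u in s..t', c u) * f s)
      = Real.exp (-F t') * g t' := by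
    intro t'
    rw [hfun t', integral_const_mul]
  refine ⟨hint, ?_, ?_⟩
  · -- bound
    intro t
    have h4 : (0:ℝ) ≤ C := (abs_nonneg _).trans (hfC t)
    have hb1 : |∫ s in Set.Iic t, Real.exp (-∫ u in s..t, c u) * f s|
        ≤ ∫ s in Set.Iic t, ‖Real.exp (-∫ u in s..t, c u) * f s‖ := by
      rw [← Real.norm_eq_abs]
      exact norm_integral_le_integral_norm _
    have hb2 : (∫ s in Set.Iic t, ‖Real.exp (-∫ u in s..t, c u) * f s‖)
        ≤ ∫ s in Set.Iic t, (C * Real.exp (-(m * t))) * Real.exp (m * s) := by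
      apply setIntegral_mono_on (hint t).norm
        ((expMul_integrableOn_Iic m hm t).const_mul _) measurableSet_Iic
      intro s hs
      have h1 : m * (t - s) ≤ ∫ u in s..t, c u := hlow s t hs
      have h2 : Real.exp (-∫ u in s..t, c u) ≤ Real.exp (-(m * t)) * Real.exp (m * s) := by
        rw [← Real.exp_add]
        exact Real.exp_le_exp.2 (by linarith)
      calc ‖Real.exp (-∫ u in s..t, c u) * f s‖
          = Real.exp (-∫ u in s..t, c u) * |f s| := by
            rw [norm_mul, Real.norm_of_nonneg (Real.exp_pos _).le, Real.norm_eq_abs]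
        _ ≤ (Real.exp (-(m * t)) * Real.exp (m * s)) * C :=
            mul_le_mul h2 (hfC s) (abs_nonneg _) (by positivity)
        _ = (C * Real.exp (-(m * t))) * Real.exp (m * s) := by ring
    have hb3 : (∫ s in Set.Iic t, (C * Real.exp (-(m * t))) * Real.exp (m * s)) = C / m := by
      rw [integral_const_mul, expMul_integral_Iic m hm t]
      rw [Real.exp_neg]
      field_simp
    calc |∫ s in Set.Iic t, Real.exp (-∫ u in s..t, c u) * f s|
        ≤ ∫ s in Set.Iic t, ‖Real.exp (-∫ u in s..t, c u) * f s‖ := hb1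
      _ ≤ ∫ s in Set.Iic t, (C * Real.exp (-(m * t))) * Real.exp (m * s) := hb2
      _ = C / m := hb3
  · -- derivative
    intro t
    have hgrep : ∀ t' : ℝ, g t' = g t + ∫ s in t..t', Real.exp (F s) * f s := by
      intro t'
      have := intervalIntegral.integral_Iic_sub_Iic (hgint t) (hgint t')
      simp only [hg_def]
      linarith [this]
    have hg2 : HasDerivAt (fun t' => g t + ∫ s in t..t', Real.exp (F s) * f s)
        (Real.exp (F t) * f t) t := by
      have := intervalIntegral.integral_hasDerivAt_right
        ((hker t).intervalIntegrable t t) ((hker t).stronglyMeasurableAtFilter _ _)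
        (hker t).continuousAt
      exact this.const_add (g t)
    have hgderiv : HasDerivAt g (Real.exp (F t) * f t) t := by
      have hfeq : g = fun t' => g t + ∫ s in t..t', Real.exp (F s) * f s := funext hgrep
      rw [hfeq]
      exact hg2
    have h1 : HasDerivAt (fun t' => Real.exp (-F t')) (Real.exp (-F t) * -(c t)) t :=
      (hFderiv t).neg.exp
    have hxd := h1.mul hgderiv
    have hxeq : (fun t' : ℝ => ∫ s in Set.Iic t', Real.exp (-∫ u in s..t', c u) * f s)
        = fun t' => Real.exp (-F t') * g t' := funext hxval
    rw [hxeq, hxval t]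
    have hone : Real.exp (-F t) * Real.exp (F t) = 1 := by
      rw [← Real.exp_add]; simp
    have : Real.exp (-F t) * -(c t) * g t + Real.exp (-F t) * (Real.exp (F t) * f t)
        = -(c t) * (Real.exp (-F t) * g t) + f t := by
      linear_combination (f t) * hone
    rw [← this]
    exact hxd
end

section
/- Let c : ℝ → ℝ be continuous with inf_{t∈ℝ} c(t) > 0, and let f : ℝ → ℝ be bounded and continuous. If y : ℝ → ℝ is bounded, differentiable, and satisfies y′(t) = −c(t)·y(t) + f(t) for all t ∈ ℝ, then y(t) = ∫_{−∞}^{t} exp(−∫_{s}^{t} c(u) du) · f(s) ds for all t ∈ ℝ. In particular, the equation x′ = −c(t)x + f(t) has exactly one bounded solution on ℝ. -/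
/-!
Variation of constants: with `F` a primitive of `c`, `(exp F * y)' = exp F * f`, so for every
`r` we have `y t = exp (-∫ r..t c) * y r + ∫ r..t exp (-∫ s..t c) * f s`. Since
`c ≥ δ := inf c > 0`, the kernel `exp (-∫ s..t c)` is at most `exp (δ (s - t))`: the first term
tends to `0` as `r → -∞` because `y` is bounded, and the second tends to the integral over
`Iic t` because `f` is bounded.
-/

open MeasureTheory Filter Topology Real Set intervalIntegral

lemma bddBelow_range_of_iInf_ne_zero {ι : Type*} {c : ι → ℝ} (h : ⨅ i, c i ≠ 0) :
    BddBelow (range c) := by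
  contrapose! h
  exact Real.iInf_of_not_bddBelow h

lemma continuous_integral_lowerLimit {c : ℝ → ℝ} (hc : Continuous c) (t : ℝ) :
    Continuous fun s => ∫ u in s..t, c u :=
  (continuous_primitive (μ := volume) (fun a b => hc.intervalIntegrable a b) t).neg.congr
    fun s => (integral_symm t s).symm

lemma norm_exp_neg_integral_mul_le {c : ℝ → ℝ} {δ C s t x : ℝ}
    (hc : IntervalIntegrable c volume s t) (hδc : ∀ u ∈ Icc s t, δ ≤ c u) (hx : |x| ≤ C)
    (hst : s ≤ t) : ‖exp (-∫ u in s..t, c u) * x‖ ≤ C * exp (δ * (s - t)) := by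
  have hmono : δ * (t - s) ≤ ∫ u in s..t, c u := by
    simpa [mul_comm] using integral_mono_on hst intervalIntegrable_const hc hδc
  rw [norm_mul, norm_of_nonneg (exp_pos _).le, mul_comm, Real.norm_eq_abs]
  exact mul_le_mul hx (exp_le_exp.mpr (by linarith)) (exp_pos _).le ((abs_nonneg _).trans hx)

lemma integrableOn_exp_neg_integral_mul_Iic {c f : ℝ → ℝ} {δ C : ℝ} (hc : Continuous c)
    (hδ : 0 < δ) (hδc : ∀ u, δ ≤ c u) (hf : Continuous f) (hfC : ∀ s, |f s| ≤ C) (t : ℝ) :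
    IntegrableOn (fun s => exp (-∫ u in s..t, c u) * f s) (Iic t) := by
  refine Integrable.mono' ((integrableOn_exp_mul_Iic hδ t).const_mul (C * exp (-(δ * t))))
    ((continuous_exp.comp (continuous_integral_lowerLimit hc t).neg).mul hf).aestronglyMeasurable
    ?_
  filter_upwards [ae_restrict_mem measurableSet_Iic] with s hs
  calc _ ≤ C * exp (δ * (s - t)) :=
        norm_exp_neg_integral_mul_le (hc.intervalIntegrable s t) (fun u _ => hδc u) (hfC s) hs
    _ = C * exp (-(δ * t)) * exp (δ * s) := by rw [mul_assoc, ← exp_add]; ring_nf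

lemma tendsto_exp_neg_integral_mul_atBot {c y : ℝ → ℝ} {δ C : ℝ} (hc : Continuous c)
    (hδ : 0 < δ) (hδc : ∀ u, δ ≤ c u) (hyC : ∀ r, |y r| ≤ C) (t : ℝ) :
    Tendsto (fun r => exp (-∫ u in r..t, c u) * y r) atBot (𝓝 0) := by
  refine squeeze_zero_norm' (a := fun r => C * exp (δ * (r - t))) ?_ ?_
  · filter_upwards [eventually_le_atBot t] with r hr
    exact norm_exp_neg_integral_mul_le (hc.intervalIntegrable r t) (fun u _ => hδc u) (hyC r) hr
  · have : Tendsto (fun r => δ * (r - t)) atBot atBot :=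
      (tendsto_atBot_add_const_right _ (-t) tendsto_id).const_mul_atBot hδ
    simpa using (tendsto_exp_atBot.comp this).const_mul C

lemma eq_exp_neg_integral_mul_add_integral {c f y : ℝ → ℝ} (hc : Continuous c)
    (hf : Continuous f) (hy : ∀ t, HasDerivAt y (-(c t) * y t + f t) t) (r t : ℝ) :
    y t = exp (-∫ u in r..t, c u) * y r + ∫ s in r..t, exp (-∫ u in s..t, c u) * f s := by
  set F := fun s => ∫ u in r..s, c u
  have hF : ∀ s, HasDerivAt F (c s) s := fun s => (hc.integral_hasStrictDerivAt r s).hasDerivAt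
  have hFc : Continuous F := continuous_iff_continuousAt.2 fun s => (hF s).continuousAt
  have hsub : ∀ s, ∫ u in s..t, c u = F t - F s := fun s =>
    (integral_interval_sub_left (hc.intervalIntegrable r t) (hc.intervalIntegrable r s)).symm
  have hftc : ∫ s in r..t, exp (F s) * f s = exp (F t) * y t - exp (F r) * y r := by
    refine integral_eq_sub_of_hasDerivAt (f := fun s => exp (F s) * y s) (fun s _ => ?_)
      (((continuous_exp.comp hFc).mul hf).intervalIntegrable r t)
    exact (((hF s).exp).mul (hy s)).congr_deriv (by ring)
  have hFr : F r = 0 := integral_same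
  have hkernel : ∀ s, exp (-∫ u in s..t, c u) * f s = exp (F s) * f s * (exp (F t))⁻¹ := by
    intro s
    rw [hsub, neg_sub, exp_sub]
    ring
  simp_rw [hkernel, intervalIntegral.integral_mul_const, hftc, hFr, exp_zero, exp_neg]
  field_simp
  ring

/-- Uniqueness of the bounded solution: if `c : ℝ → ℝ` is continuous
with `inf c > 0`, `f` is bounded and continuous, and `y` is a bounded differentiable
function with `y' t = -c t · y t + f t` for all `t`, then
`y t = ∫_{-∞}^{t} exp(-∫_s^t c) · f s ds`; in particular the equation has exactly one
bounded solution on `ℝ`. -/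
theorem stmt11 (c f y : ℝ → ℝ) (hc : Continuous c) (hcinf : 0 < ⨅ t : ℝ, c t)
    (hfc : Continuous f) (hfb : ∃ C : ℝ, ∀ t : ℝ, |f t| ≤ C)
    (hyb : ∃ C : ℝ, ∀ t : ℝ, |y t| ≤ C)
    (hy : ∀ t : ℝ, HasDerivAt y (-(c t) * y t + f t) t) :
    ∀ t : ℝ, y t = ∫ s in Set.Iic t, Real.exp (-∫ u in s..t, c u) * f s := by
  obtain ⟨Cf, hCf⟩ := hfb
  obtain ⟨Cy, hCy⟩ := hyb
  have hδc : ∀ t, ⨅ t, c t ≤ c t := ciInf_le (bddBelow_range_of_iInf_ne_zero hcinf.ne')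
  intro t
  have hlim := (tendsto_exp_neg_integral_mul_atBot hc hcinf hδc hCy t).add
    (intervalIntegral_tendsto_integral_Iic t
      (integrableOn_exp_neg_integral_mul_Iic hc hcinf hδc hfc hCf t) tendsto_id)
  rw [zero_add] at hlim
  exact tendsto_nhds_unique
    (tendsto_const_nhds.congr fun r => eq_exp_neg_integral_mul_add_integral hc hfc hy r t) hlim
end

section
/- Let c : ℝ → ℝ be continuous, (Bohr) almost periodic, with inf_{t∈ℝ} c(t) > 0, and let f : ℝ → ℝ be pseudo almost periodic. Then the unique bounded solution x(t) = ∫_{−∞}^{t} exp(−∫_{s}^{t} c(u) du) · f(s) ds of x′ = −c(t)x + f(t) is pseudo almost periodic. -/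
open MeasureTheory

/-!
Let `m = inf c > 0` and `U(t, s) = exp (-∫_s^t c)`, so that `U(t, t - u) ≤ e^{-mu}` for `u ≥ 0`
and the solution is `x(t) = ∫_0^∞ U(t, t - u) f(t - u) du`. This is linear in `f`, so the almost
periodic part `g` and the ergodic part `φ` of `f` can be treated separately.

Since the translates of an almost periodic function are totally bounded, `c` and `g` have common
`ε`-almost periods `τ` in every interval of a fixed length. For such `τ`,
`|U(t + τ, t + τ - u) - U(t, t - u)| ≤ ε u e^{-mu}`, so `τ` is an `O(ε)`-almost period of the
solution driven by `g`.

For `φ`, `|x(s)| ≤ ∫_0^∞ e^{-mu} |φ(s - u)| du`, and by Fubini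
`∫_{-r}^r |x| ≤ ∫_0^∞ e^{-mu} ∫_{-(r+u)}^{r+u} |φ| du`, which is `o(r)` because
`∫_{-R}^R |φ| = o(R)` and `∫_0^∞ (1 + u) e^{-mu} du < ∞`.
-/

open Set Filter Real Topology

def IsAlmostPeriod (g : ℝ → ℝ) (ε τ : ℝ) : Prop :=
  ∀ t, |g (t + τ) - g t| ≤ ε

lemma IsAlmostPeriod.sub {g : ℝ → ℝ} {ε δ a b : ℝ} (ha : IsAlmostPeriod g ε a)
    (hb : IsAlmostPeriod g δ b) : IsAlmostPeriod g (ε + δ) (a - b) := by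
  intro t
  have hb' := hb (t - b)
  rw [sub_add_cancel] at hb'
  calc |g (t + (a - b)) - g t| = |(g (t - b + a) - g (t - b)) - (g t - g (t - b))| := by
        ring_nf
    _ ≤ ε + δ := (abs_sub _ _).trans (add_le_add (ha (t - b)) hb')

lemma UniformContinuous.exists_isAlmostPeriod_of_abs_lt {g : ℝ → ℝ} (hg : UniformContinuous g)
    {ε : ℝ} (hε : 0 < ε) : ∃ δ > 0, ∀ τ, |τ| < δ → IsAlmostPeriod g ε τ := by
  obtain ⟨δ, hδ, h⟩ := Metric.uniformContinuous_iff.1 hg ε hε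
  refine ⟨δ, hδ, fun τ hτ t => le_of_lt ?_⟩
  simpa [Real.dist_eq] using h (a := t + τ) (b := t) (by simpa [Real.dist_eq] using hτ)

lemma exists_abs_le_eq_of_finite_range {α : Type*} {κ : ℝ → α} (hκ : (range κ).Finite) :
    ∃ M, ∀ s, ∃ r, |r| ≤ M ∧ κ r = κ s := by
  have := hκ.to_subtype
  obtain ⟨M, hM⟩ := (finite_range fun y => |rangeSplitting κ y|).bddAbove
  exact ⟨M, fun s => ⟨_, hM (mem_range_self ⟨κ s, mem_range_self s⟩), apply_rangeSplitting κ _⟩⟩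

namespace AlmostPeriodic

variable {g : ℝ → ℝ}

lemma exists_isAlmostPeriod (hg : AlmostPeriodic g) {ε : ℝ} (hε : 0 < ε) :
    ∃ l > 0, ∀ a, ∃ τ ∈ Icc a (a + l), IsAlmostPeriod g ε τ := by
  obtain ⟨l, hl, h⟩ := hg.2 ε hε
  exact ⟨l, hl, fun a => (h a).imp fun τ ⟨hτ, hτg⟩ => ⟨hτ, fun t => (hτg t).le⟩⟩

lemma exists_abs_le (hg : AlmostPeriodic g) : ∃ C, ∀ t, |g t| ≤ C := by
  obtain ⟨l, -, hl⟩ := hg.exists_isAlmostPeriod one_pos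
  obtain ⟨M, hM⟩ := isCompact_Icc.exists_bound_of_continuousOn (hg.1.continuousOn (s := Icc 0 l))
  refine ⟨M + 1, fun t => ?_⟩
  obtain ⟨τ, ⟨h0, hl'⟩, hτ⟩ := hl (-t)
  have hM' := hM (t + τ) ⟨by linarith, by linarith⟩
  rw [Real.norm_eq_abs] at hM'
  linarith [hτ t, abs_sub_abs_le_abs_sub (g t) (g (t + τ)), abs_sub_comm (g t) (g (t + τ))]

lemma uniformContinuous (hg : AlmostPeriodic g) : UniformContinuous g := by
  rw [Metric.uniformContinuous_iff]
  intro ε hε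
  obtain ⟨l, -, hl⟩ := hg.exists_isAlmostPeriod (ε := ε / 3) (by positivity)
  obtain ⟨δ, hδ, hK⟩ := Metric.uniformContinuousOn_iff.1
    ((isCompact_Icc (a := -1) (b := l + 1)).uniformContinuousOn_of_continuous hg.1.continuousOn)
    (ε / 3) (by positivity)
  refine ⟨min δ 1, by positivity, fun {s t} hst => ?_⟩
  rw [Real.dist_eq] at hst ⊢
  obtain ⟨τ, ⟨h0, hl'⟩, hτ⟩ := hl (-t)
  have hst1 := abs_lt.1 (hst.trans_le (min_le_right _ _))
  have hK' := hK (s + τ) ⟨by linarith, by linarith⟩ (t + τ) ⟨by linarith, by linarith⟩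
    (by rw [Real.dist_eq, add_sub_add_right_eq_sub]; exact hst.trans_le (min_le_left _ _))
  rw [Real.dist_eq] at hK'
  calc |g s - g t| = |(g (s + τ) - g (t + τ)) + (g s - g (s + τ)) + (g (t + τ) - g t)| := by
        ring_nf
    _ ≤ |g (s + τ) - g (t + τ)| + |g s - g (s + τ)| + |g (t + τ) - g t| := abs_add_three _ _ _
    _ < ε := by linarith [hτ s, hτ t, abs_sub_comm (g s) (g (s + τ))]

lemma exists_finite_isAlmostPeriod_sub (hg : AlmostPeriodic g) {ε : ℝ} (hε : 0 < ε) :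
    ∃ F : Set ℝ, F.Finite ∧ ∀ s, ∃ τ ∈ F, IsAlmostPeriod g ε (s - τ) := by
  obtain ⟨δ, hδ, hsmall⟩ := hg.uniformContinuous.exists_isAlmostPeriod_of_abs_lt (half_pos hε)
  obtain ⟨l, -, hl⟩ := hg.exists_isAlmostPeriod (half_pos hε)
  obtain ⟨F, -, hF, hcover⟩ := finite_cover_balls_of_compact (isCompact_Icc (a := 0) (b := l)) hδ
  refine ⟨F, hF, fun s => ?_⟩
  obtain ⟨σ, ⟨h0, hl'⟩, hσ⟩ := hl (-s)
  obtain ⟨τ, hτF, hτ⟩ := mem_iUnion₂.1 (hcover (⟨by linarith, by linarith⟩ : s + σ ∈ Icc 0 l))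
  refine ⟨τ, hτF, ?_⟩
  have := (hsmall (s + σ - τ) (by rwa [← Real.dist_eq])).sub hσ
  rwa [add_halves, sub_right_comm, add_sub_cancel_right] at this

end AlmostPeriodic

lemma exists_common_isAlmostPeriod {c g : ℝ → ℝ} (hc : AlmostPeriodic c) (hg : AlmostPeriodic g)
    {ε : ℝ} (hε : 0 < ε) :
    ∃ l > 0, ∀ a, ∃ τ ∈ Icc a (a + l), IsAlmostPeriod c ε τ ∧ IsAlmostPeriod g ε τ := by
  obtain ⟨F, hF, hcF⟩ := hc.exists_finite_isAlmostPeriod_sub (half_pos hε)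
  obtain ⟨G, hG, hgG⟩ := hg.exists_finite_isAlmostPeriod_sub (half_pos hε)
  choose u huF hu using hcF
  choose v hvG hv using hgG
  obtain ⟨M, hM⟩ := exists_abs_le_eq_of_finite_range (κ := fun s => (u s, v s))
    ((hF.prod hG).subset (range_subset_iff.2 fun s => ⟨huF s, hvG s⟩))
  have hM0 : 0 ≤ M := by
    obtain ⟨r, hr, -⟩ := hM 0
    exact (abs_nonneg r).trans hr
  refine ⟨2 * M + 1, by linarith, fun a => ?_⟩
  obtain ⟨r, hrM, hr⟩ := hM (a + M)
  simp only [Prod.mk.injEq] at hr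
  obtain ⟨hr₁, hr₂⟩ := abs_le.1 hrM
  refine ⟨a + M - r, ⟨by linarith, by linarith⟩, ?_, ?_⟩
  · have := (hu (a + M)).sub (hu r)
    rwa [hr.1, add_halves, sub_sub_sub_cancel_right] at this
  · have := (hv (a + M)).sub (hv r)
    rwa [hr.2, add_halves, sub_sub_sub_cancel_right] at this

lemma abs_exp_neg_sub_exp_neg_le {a b μ : ℝ} (ha : μ ≤ a) (hb : μ ≤ b) :
    |exp (-a) - exp (-b)| ≤ exp (-μ) * |a - b| := by
  have hab : exp (-a) = exp (-b) * exp (b - a) := by rw [← exp_add]; ring_nf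
  have hba : exp (-b) = exp (-a) * exp (a - b) := by rw [← exp_add]; ring_nf
  have h₁ := add_one_le_exp (b - a)
  have h₂ := add_one_le_exp (a - b)
  have hμa : exp (-a) ≤ exp (-μ) := exp_le_exp.2 (by linarith)
  have hμb : exp (-b) ≤ exp (-μ) := exp_le_exp.2 (by linarith)
  rcases le_total a b with h | h
  · rw [abs_of_nonneg (by nlinarith [exp_pos (-b)]), abs_of_nonpos (by linarith)]
    nlinarith [exp_pos (-a)]
  · rw [abs_of_nonpos (by nlinarith [exp_pos (-a)]), abs_of_nonneg (by linarith)]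
    nlinarith [exp_pos (-b)]

lemma integrableOn_one_add_mul_exp_neg_mul {m : ℝ} (hm : 0 < m) :
    IntegrableOn (fun u => (1 + u) * exp (-m * u)) (Ioi 0) := by
  have h := integrableOn_rpow_mul_exp_neg_mul_rpow (s := 1) (p := 1) (by norm_num) one_pos hm
  simp only [rpow_one] at h
  exact ((exp_neg_integrableOn_Ioi 0 hm).add h).congr_fun (fun u _ => by simp; ring)
    measurableSet_Ioi

lemma integrableOn_exp_neg_mul_mul {m C : ℝ} (hm : 0 < m) {h : ℝ → ℝ} (hh : Continuous h)
    (hC : ∀ u, |h u| ≤ C) : IntegrableOn (fun u => exp (-m * u) * h u) (Ioi 0) :=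
  (exp_neg_integrableOn_Ioi 0 hm).mul_bdd hh.aestronglyMeasurable (ae_of_all _ hC)

noncomputable def evolution (c : ℝ → ℝ) (t s : ℝ) : ℝ :=
  exp (-∫ u in s..t, c u)

lemma evolution_pos (c : ℝ → ℝ) (t s : ℝ) : 0 < evolution c t s := exp_pos _

section Evolution

variable {c : ℝ → ℝ} {m : ℝ}

lemma continuous_evolution (hc : Continuous c) :
    Continuous fun p : ℝ × ℝ => evolution c p.1 p.2 := by
  have hP := intervalIntegral.continuous_primitive (μ := volume) hc.intervalIntegrable 0
  have hsub (p : ℝ × ℝ) : ∫ u in p.2..p.1, c u = (∫ u in 0..p.1, c u) - ∫ u in 0..p.2, c u :=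
    (intervalIntegral.integral_interval_sub_left (hc.intervalIntegrable _ _)
      (hc.intervalIntegrable _ _)).symm
  simp only [evolution, hsub]
  fun_prop

lemma mul_le_integral_sub (hc : Continuous c) (hcm : ∀ t, m ≤ c t) {u : ℝ} (hu : 0 ≤ u)
    (t : ℝ) : m * u ≤ ∫ v in (t - u)..t, c v := by
  calc m * u = ∫ _ in (t - u)..t, m := by simp [mul_comm]
    _ ≤ ∫ v in (t - u)..t, c v := intervalIntegral.integral_mono_on (by linarith)
          (intervalIntegrable_const (μ := volume)) (hc.intervalIntegrable _ _) fun v _ => hcm v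

lemma evolution_sub_le (hc : Continuous c) (hcm : ∀ t, m ≤ c t) {u : ℝ} (hu : 0 ≤ u) (t : ℝ) :
    evolution c t (t - u) ≤ exp (-m * u) := by
  rw [evolution, neg_mul, exp_le_exp, neg_le_neg_iff]
  exact mul_le_integral_sub hc hcm hu t

lemma abs_evolution_mul_le (hc : Continuous c) (hcm : ∀ t, m ≤ c t) {u : ℝ} (hu : 0 ≤ u)
    (t y : ℝ) : |evolution c t (t - u) * y| ≤ exp (-m * u) * |y| := by
  rw [abs_mul, abs_of_pos (evolution_pos c t _)]
  exact mul_le_mul_of_nonneg_right (evolution_sub_le hc hcm hu t) (abs_nonneg y)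

lemma abs_evolution_add_sub_le (hc : Continuous c) (hcm : ∀ t, m ≤ c t) {ε τ : ℝ}
    (hτ : IsAlmostPeriod c ε τ) {u : ℝ} (hu : 0 ≤ u) (t : ℝ) :
    |evolution c (t + τ) (t + τ - u) - evolution c t (t - u)| ≤ ε * u * exp (-m * u) := by
  have hshift : (∫ v in (t + τ - u)..(t + τ), c v) - ∫ v in (t - u)..t, c v
      = ∫ v in (t - u)..t, (c (v + τ) - c v) := by
    rw [intervalIntegral.integral_sub (f := fun v => c (v + τ))
      ((hc.comp (continuous_add_const τ)).intervalIntegrable _ _) (hc.intervalIntegrable _ _),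
      intervalIntegral.integral_comp_add_right c, sub_add_eq_add_sub]
  have hdiff : |(∫ v in (t + τ - u)..(t + τ), c v) - ∫ v in (t - u)..t, c v| ≤ ε * u := by
    rw [hshift]
    simpa [abs_of_nonneg hu] using
      intervalIntegral.norm_integral_le_of_norm_le_const (a := t - u) (b := t)
        (f := fun v => c (v + τ) - c v) fun v _ => (Real.norm_eq_abs _).trans_le (hτ v)
  calc _ ≤ exp (-(m * u)) * |(∫ v in (t + τ - u)..(t + τ), c v) - ∫ v in (t - u)..t, c v| :=
        abs_exp_neg_sub_exp_neg_le (mul_le_integral_sub hc hcm hu _)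
          (mul_le_integral_sub hc hcm hu _)
    _ ≤ ε * u * exp (-m * u) := by
        rw [neg_mul, mul_comm]
        exact mul_le_mul_of_nonneg_right hdiff (exp_pos _).le

end Evolution

noncomputable def boundedSolution (c h : ℝ → ℝ) (t : ℝ) : ℝ :=
  ∫ s in Iic t, evolution c t s * h s

lemma integral_Iic_eq_integral_Ioi_sub (F : ℝ → ℝ) (t : ℝ) :
    ∫ s in Iic t, F s = ∫ u in Ioi 0, F (t - u) := by
  rw [← integral_Ici_eq_integral_Ioi, ← (Measure.measurePreserving_sub_left volume t)
    |>.setIntegral_preimage_emb (Homeomorph.subLeft t).measurableEmbedding F (Iic t)]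
  congr 2
  ext u
  simp

lemma boundedSolution_eq (c h : ℝ → ℝ) (t : ℝ) :
    boundedSolution c h t = ∫ u in Ioi 0, evolution c t (t - u) * h (t - u) :=
  integral_Iic_eq_integral_Ioi_sub _ t

section BoundedSolution

variable {c h : ℝ → ℝ} {m C : ℝ}

lemma continuous_evolution_mul (hc : Continuous c) (hh : Continuous h) :
    Continuous fun p : ℝ × ℝ => evolution c p.1 (p.1 - p.2) * h (p.1 - p.2) :=
  ((continuous_evolution hc).comp (continuous_fst.prodMk (continuous_fst.sub continuous_snd))).mul
    (hh.comp (continuous_fst.sub continuous_snd))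

lemma integrableOn_evolution_mul (hc : Continuous c) (hm : 0 < m) (hcm : ∀ t, m ≤ c t)
    (hh : Continuous h) (hC : ∀ s, |h s| ≤ C) (t : ℝ) :
    IntegrableOn (fun u => evolution c t (t - u) * h (t - u)) (Ioi 0) := by
  refine (integrableOn_exp_neg_mul_mul hm (hh.comp (continuous_sub_left t)).abs
    (fun u => (abs_abs _).trans_le (hC _))).mono'
    ((continuous_evolution_mul hc hh).comp (Continuous.prodMk_right t)).aestronglyMeasurable ?_
  filter_upwards [ae_restrict_mem measurableSet_Ioi] with u hu
  exact abs_evolution_mul_le hc hcm (le_of_lt hu) t _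

lemma abs_boundedSolution_le (hc : Continuous c) (hm : 0 < m) (hcm : ∀ t, m ≤ c t)
    (hh : Continuous h) (hC : ∀ s, |h s| ≤ C) (t : ℝ) :
    |boundedSolution c h t| ≤ ∫ u in Ioi 0, exp (-m * u) * |h (t - u)| := by
  rw [boundedSolution_eq, ← Real.norm_eq_abs]
  refine norm_integral_le_of_norm_le (integrableOn_exp_neg_mul_mul hm
    (hh.comp (continuous_sub_left t)).abs (fun u => (abs_abs _).trans_le (hC _))) ?_
  filter_upwards [ae_restrict_mem measurableSet_Ioi] with u hu
  exact abs_evolution_mul_le hc hcm (le_of_lt hu) t _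

lemma continuous_boundedSolution (hc : Continuous c) (hm : 0 < m) (hcm : ∀ t, m ≤ c t)
    (hh : Continuous h) (hC : ∀ s, |h s| ≤ C) : Continuous (boundedSolution c h) := by
  simp only [funext (boundedSolution_eq c h)]
  refine continuous_of_dominated (bound := fun u => exp (-m * u) * C)
    (fun t => ((continuous_evolution_mul hc hh).comp
      (Continuous.prodMk_right t)).aestronglyMeasurable) (fun t => ?_)
    ((exp_neg_integrableOn_Ioi 0 hm).mul_const C)
    (ae_of_all _ fun u => (continuous_evolution_mul hc hh).comp (Continuous.prodMk_left u))
  filter_upwards [ae_restrict_mem measurableSet_Ioi] with u hu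
  exact (abs_evolution_mul_le hc hcm (le_of_lt hu) t _).trans
    (mul_le_mul_of_nonneg_left (hC _) (exp_pos _).le)

lemma boundedSolution_add (hc : Continuous c) (hm : 0 < m) (hcm : ∀ t, m ≤ c t)
    {g φ : ℝ → ℝ} {D : ℝ} (hg : Continuous g) (hgC : ∀ s, |g s| ≤ C) (hφ : Continuous φ)
    (hφD : ∀ s, |φ s| ≤ D) :
    boundedSolution c (g + φ) = boundedSolution c g + boundedSolution c φ := by
  ext t
  simp only [boundedSolution_eq, Pi.add_apply, mul_add]
  exact integral_add (integrableOn_evolution_mul hc hm hcm hg hgC t)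
    (integrableOn_evolution_mul hc hm hcm hφ hφD t)

end BoundedSolution

lemma abs_evolution_mul_add_sub_le {c g : ℝ → ℝ} {m C ε τ : ℝ} (hc : Continuous c)
    (hcm : ∀ t, m ≤ c t) (hgC : ∀ s, |g s| ≤ C) (hτc : IsAlmostPeriod c ε τ)
    (hτg : IsAlmostPeriod g ε τ) {u : ℝ} (hu : 0 ≤ u) (t : ℝ) :
    |evolution c (t + τ) (t + τ - u) * g (t + τ - u) - evolution c t (t - u) * g (t - u)|
      ≤ ε * (C + 1) * ((1 + u) * exp (-m * u)) := by
  have hC : 0 ≤ C := (abs_nonneg _).trans (hgC 0)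
  have hε : 0 ≤ ε := (abs_nonneg _).trans (hτc 0)
  have hg : |g (t + τ - u) - g (t - u)| ≤ ε := by
    simpa only [sub_add_eq_add_sub] using hτg (t - u)
  have hE := abs_evolution_add_sub_le hc hcm hτc hu t
  have hE' := abs_evolution_mul_le hc hcm hu t (g (t + τ - u) - g (t - u))
  have hexp := exp_pos (-m * u)
  calc _ = |(evolution c (t + τ) (t + τ - u) - evolution c t (t - u)) * g (t + τ - u)
          + evolution c t (t - u) * (g (t + τ - u) - g (t - u))| := by ring_nf
    _ ≤ ε * u * exp (-m * u) * C + exp (-m * u) * ε := by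
        grw [abs_add_le, abs_mul, hE, hgC, hE', hg]
    _ ≤ ε * (C + 1) * ((1 + u) * exp (-m * u)) := by
        nlinarith [mul_nonneg (mul_nonneg hε hexp.le) (mul_nonneg hC hu),
          mul_nonneg (mul_nonneg hε hexp.le) hu, mul_nonneg (mul_nonneg hε hexp.le) hC]

lemma AlmostPeriodic.boundedSolution {c g : ℝ → ℝ} {m : ℝ} (hcap : AlmostPeriodic c)
    (hm : 0 < m) (hcm : ∀ t, m ≤ c t) (hg : AlmostPeriodic g) :
    AlmostPeriodic (boundedSolution c g) := by
  obtain ⟨C, hgC⟩ := hg.exists_abs_le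
  refine ⟨continuous_boundedSolution hcap.1 hm hcm hg.1 hgC, fun ε hε => ?_⟩
  set K := ∫ u in Ioi 0, (1 + u) * exp (-m * u)
  have hK : 0 ≤ (C + 1) * K := mul_nonneg (by linarith [(abs_nonneg _).trans (hgC 0)])
    (setIntegral_nonneg measurableSet_Ioi fun u (hu : 0 < u) => by positivity)
  set δ := ε / ((C + 1) * K + 1)
  obtain ⟨l, hl, hτ⟩ := exists_common_isAlmostPeriod hcap hg (show 0 < δ by positivity)
  refine ⟨l, hl, fun a => ?_⟩
  obtain ⟨τ, hτa, hτc, hτg⟩ := hτ a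
  refine ⟨τ, hτa, fun t => ?_⟩
  rw [boundedSolution_eq, boundedSolution_eq,
    ← integral_sub (integrableOn_evolution_mul hcap.1 hm hcm hg.1 hgC _)
      (integrableOn_evolution_mul hcap.1 hm hcm hg.1 hgC _), ← Real.norm_eq_abs]
  calc _ ≤ ∫ u in Ioi 0, δ * (C + 1) * ((1 + u) * exp (-m * u)) := by
        refine norm_integral_le_of_norm_le
          ((integrableOn_one_add_mul_exp_neg_mul hm).const_mul _) ?_
        filter_upwards [ae_restrict_mem measurableSet_Ioi] with u hu
        exact abs_evolution_mul_add_sub_le hcap.1 hcm hgC hτc hτg (le_of_lt hu) t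
    _ = δ * ((C + 1) * K) := by rw [integral_const_mul, mul_assoc]
    _ < ε := by
        rw [div_mul_eq_mul_div, div_lt_iff₀ (by positivity)]
        nlinarith

lemma integral_abs_comp_sub_le {φ : ℝ → ℝ} (hφ : Continuous φ) {r u : ℝ} (hr : 0 ≤ r)
    (hu : 0 ≤ u) : ∫ s in -r..r, |φ (s - u)| ≤ ∫ s in -(r + u)..(r + u), |φ s| := by
  rw [intervalIntegral.integral_comp_sub_right (fun s => |φ s|)]
  exact intervalIntegral.integral_mono_interval (by linarith) (by linarith) (by linarith)
    (ae_of_all _ fun _ => abs_nonneg _) (hφ.abs.intervalIntegrable _ _)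

lemma intervalIntegral_abs_le_of_abs_le_integral {φ X : ℝ → ℝ} {m C r : ℝ} (hm : 0 < m)
    (hφ : Continuous φ) (hC : ∀ s, |φ s| ≤ C)
    (hXφ : ∀ s, |X s| ≤ ∫ u in Ioi 0, exp (-m * u) * |φ (s - u)|) (hr : 0 ≤ r) :
    ∫ s in -r..r, |X s| ≤ ∫ u in Ioi 0, exp (-m * u) * ∫ s in -r..r, |φ (s - u)| := by
  have hprod : Integrable (Function.uncurry fun s u => exp (-m * u) * |φ (s - u)|)
      ((volume.restrict (Ioc (-r) r)).prod (volume.restrict (Ioi 0))) := by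
    refine Integrable.mono' ((integrableOn_const (C := C) measure_Ioc_lt_top.ne).mul_prod
      (exp_neg_integrableOn_Ioi 0 hm)) (by fun_prop) (ae_of_all _ fun p => ?_)
    rw [Function.uncurry_apply_pair, Real.norm_eq_abs, abs_mul, abs_abs, abs_of_pos (exp_pos _),
      mul_comm C]
    exact mul_le_mul_of_nonneg_left (hC _) (exp_pos _).le
  simp only [intervalIntegral.integral_of_le (neg_le_self hr)]
  calc ∫ s in Ioc (-r) r, |X s|
      ≤ ∫ s in Ioc (-r) r, ∫ u in Ioi 0, exp (-m * u) * |φ (s - u)| :=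
        integral_mono_of_nonneg (ae_of_all _ fun _ => abs_nonneg _) hprod.integral_prod_left
          (ae_of_all _ hXφ)
    _ = ∫ u in Ioi 0, ∫ s in Ioc (-r) r, exp (-m * u) * |φ (s - u)| :=
        integral_integral_swap hprod
    _ = _ := by simp only [integral_const_mul]

lemma PAPZero.eventually_integral_abs_le {φ : ℝ → ℝ} (hφ : PAPZero φ) {ε : ℝ} (hε : 0 < ε) :
    ∀ᶠ R in atTop, ∫ s in -R..R, |φ s| ≤ 2 * R * ε := by
  filter_upwards [hφ.2.2.eventually (gt_mem_nhds hε), eventually_gt_atTop 0] with R hR hR0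
  rw [one_div, inv_mul_lt_iff₀ (by positivity)] at hR
  exact hR.le

lemma tendsto_mean_abs_of_abs_le_integral {φ X : ℝ → ℝ} {m : ℝ} (hm : 0 < m) (hφ : PAPZero φ)
    (hXφ : ∀ s, |X s| ≤ ∫ u in Ioi 0, exp (-m * u) * |φ (s - u)|) :
    Tendsto (fun r => 1 / (2 * r) * ∫ s in -r..r, |X s|) atTop (𝓝 0) := by
  obtain ⟨C, hC⟩ := hφ.1
  set K := ∫ u in Ioi 0, (1 + u) * exp (-m * u)
  have hK : 0 ≤ K := setIntegral_nonneg measurableSet_Ioi fun u (hu : 0 < u) => by positivity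
  rw [Metric.tendsto_atTop]
  intro ε hε
  set δ := ε / (K + 1)
  obtain ⟨R, hR⟩ := eventually_atTop.1 (hφ.eventually_integral_abs_le (show 0 < δ by positivity))
  refine ⟨max R 1, fun r hr => ?_⟩
  have hr1 : 1 ≤ r := le_of_max_le_right hr
  have hshift (u : ℝ) (hu : u ∈ Ioi 0) : exp (-m * u) * ∫ s in -r..r, |φ (s - u)|
      ≤ 2 * r * δ * ((1 + u) * exp (-m * u)) := by
    have hu : 0 < u := hu
    have hI := (integral_abs_comp_sub_le hφ.2.1 (by linarith) hu.le).trans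
      (hR (r + u) (by linarith [le_of_max_le_left hr]))
    have hexp := exp_pos (-m * u)
    nlinarith [mul_le_mul_of_nonneg_left hI hexp.le, mul_nonneg (mul_nonneg hexp.le hu.le)
      (mul_nonneg (sub_nonneg.2 hr1) (show 0 ≤ δ by positivity))]
  rw [Real.dist_eq, sub_zero, abs_of_nonneg (mul_nonneg (by positivity)
    (intervalIntegral.integral_nonneg (by linarith) fun _ _ => abs_nonneg _))]
  calc 1 / (2 * r) * ∫ s in -r..r, |X s|
      ≤ 1 / (2 * r) * ∫ u in Ioi 0, 2 * r * δ * ((1 + u) * exp (-m * u)) := by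
        refine mul_le_mul_of_nonneg_left ((intervalIntegral_abs_le_of_abs_le_integral hm hφ.2.1 hC
          hXφ (by linarith)).trans (integral_mono_of_nonneg (ae_of_all _ fun u => ?_)
          ((integrableOn_one_add_mul_exp_neg_mul hm).const_mul _)
          ((ae_restrict_iff' measurableSet_Ioi).2 (ae_of_all _ hshift)))) (by positivity)
        exact mul_nonneg (exp_pos _).le
          (intervalIntegral.integral_nonneg (by linarith) fun _ _ => abs_nonneg _)
    _ = δ * K := by
        rw [integral_const_mul, ← mul_assoc, ← mul_assoc, one_div_mul_cancel (by positivity),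
          one_mul]
    _ < ε := by
        rw [div_mul_eq_mul_div, div_lt_iff₀ (by positivity)]
        nlinarith

lemma PAPZero.boundedSolution {c φ : ℝ → ℝ} {m : ℝ} (hc : Continuous c) (hm : 0 < m)
    (hcm : ∀ t, m ≤ c t) (hφ : PAPZero φ) : PAPZero (boundedSolution c φ) := by
  obtain ⟨C, hC⟩ := hφ.1
  have hX := abs_boundedSolution_le hc hm hcm hφ.2.1 hC
  refine ⟨⟨C * ∫ u in Ioi 0, exp (-m * u), fun t => (hX t).trans ?_⟩,
    continuous_boundedSolution hc hm hcm hφ.2.1 hC, tendsto_mean_abs_of_abs_le_integral hm hφ hX⟩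
  rw [← integral_const_mul]
  refine setIntegral_mono (integrableOn_exp_neg_mul_mul hm
    (hφ.2.1.comp (continuous_sub_left t)).abs (fun u => (abs_abs _).trans_le (hC _)))
    ((exp_neg_integrableOn_Ioi 0 hm).const_mul C) fun u => ?_
  rw [mul_comm C]
  exact mul_le_mul_of_nonneg_left (hC _) (exp_pos _).le

theorem stmt12_general (c f : ℝ → ℝ) (hcap : AlmostPeriodic c)
    (hcinf : 0 < ⨅ t : ℝ, c t) (hf : PseudoAlmostPeriodic f) :
    PseudoAlmostPeriodic
      (fun t : ℝ => ∫ s in Set.Iic t, Real.exp (-∫ u in s..t, c u) * f s) := by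
  have hbdd : BddBelow (range c) := by
    by_contra h
    rw [Real.iInf_of_not_bddBelow h] at hcinf
    exact hcinf.false
  have hcm (t : ℝ) : ⨅ s, c s ≤ c t := ciInf_le hbdd t
  obtain ⟨g, φ, hg, hφ, rfl⟩ := hf
  obtain ⟨C, hgC⟩ := hg.exists_abs_le
  obtain ⟨D, hφD⟩ := hφ.1
  exact ⟨boundedSolution c g, boundedSolution c φ, hcap.boundedSolution hcinf hcm hg,
    hφ.boundedSolution hcap.1 hcinf hcm,
    boundedSolution_add hcap.1 hcinf hcm hg.1 hgC hφ.2.1 hφD⟩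

/-- If `c : ℝ → ℝ` is continuous, almost periodic, with `inf c > 0`,
and `f` is pseudo almost periodic, then the unique bounded solution
`x t = ∫_{-∞}^{t} exp(-∫_s^t c) · f s ds` of `x' = -c(t) x + f(t)` is pseudo almost
periodic. -/
theorem stmt12 (c f : ℝ → ℝ) (hc : Continuous c) (hcap : AlmostPeriodic c)
    (hcinf : 0 < ⨅ t : ℝ, c t) (hf : PseudoAlmostPeriodic f) :
    PseudoAlmostPeriodic
      (fun t : ℝ => ∫ s in Set.Iic t, Real.exp (-∫ u in s..t, c u) * f s) :=
  stmt12_general c f hcap hcinf hf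
end

section
/- Let c : ℤ → ℝ satisfy c(t) ≥ c⁻ for all t ∈ ℤ, where c⁻ > 0, and let f : ℤ → ℝ be bounded. Then for every t ∈ ℤ the series x(t) = Σ_{s=−∞}^{t} (∏_{u=s}^{t} (1 + c(u))^{−1}) · f(s) converges absolutely, x is bounded, and x satisfies the difference equation x(t) − x(t−1) = −c(t)·x(t) + f(t) for all t ∈ ℤ; moreover x is the unique bounded solution of this equation. -/
open Finset

set_option maxHeartbeats 1000000 in
/-- Integer case of the bounded-solution lemma: if `c : ℤ → ℝ` satisfies
`c t ≥ c⁻ > 0` and `f` is bounded, then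
`x t = ∑_{s=-∞}^{t} (∏_{u=s}^{t} (1 + c u)⁻¹) · f s` (written as a sum over `n : ℕ` with
`s = t - n`) converges absolutely, `x` is bounded, satisfies
`x t - x (t-1) = -c t · x t + f t` for all `t`, and is the unique bounded solution. -/
theorem stmt13 (c f : ℤ → ℝ) (cm : ℝ) (hcm : 0 < cm) (hc : ∀ t : ℤ, cm ≤ c t)
    (hfb : ∃ C : ℝ, ∀ t : ℤ, |f t| ≤ C) :
    ∃ x : ℤ → ℝ,
      (∀ t : ℤ, x t = ∑' n : ℕ, (∏ u ∈ Finset.Icc (t - (n : ℤ)) t, (1 + c u)⁻¹) * f (t - n)) ∧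
      (∀ t : ℤ, Summable
        (fun n : ℕ => |(∏ u ∈ Finset.Icc (t - (n : ℤ)) t, (1 + c u)⁻¹) * f (t - n)|)) ∧
      (∃ C : ℝ, ∀ t : ℤ, |x t| ≤ C) ∧
      (∀ t : ℤ, x t - x (t - 1) = -(c t) * x t + f t) ∧
      (∀ y : ℤ → ℝ, (∃ C : ℝ, ∀ t : ℤ, |y t| ≤ C) →
        (∀ t : ℤ, y t - y (t - 1) = -(c t) * y t + f t) → y = x) := by
  obtain ⟨C, hf⟩ := hfb
  have hC0 : 0 ≤ C := le_trans (abs_nonneg _) (hf 0)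
  set r : ℝ := (1 + cm)⁻¹ with hrdef
  have h1cm : (0:ℝ) < 1 + cm := by linarith
  have hrpos : 0 < r := inv_pos.mpr h1cm
  have hrlt : r < 1 := by
    rw [hrdef, inv_lt_one_iff₀]; right; linarith
  have hpos : ∀ u : ℤ, 0 < 1 + c u := fun u => by have := hc u; linarith
  set P : ℤ → ℕ → ℝ := fun t n => ∏ u ∈ Finset.Icc (t - (n : ℤ)) t, (1 + c u)⁻¹ with hPdef
  have hPpos : ∀ t n, 0 < P t n := fun t n =>
    Finset.prod_pos fun u _ => inv_pos.mpr (hpos u)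
  have hcard : ∀ (t : ℤ) (n : ℕ), (Finset.Icc (t - (n : ℤ)) t).card = n + 1 := by
    intro t n
    rw [Int.card_Icc]
    omega
  have hPle : ∀ t n, P t n ≤ r ^ (n + 1) := by
    intro t n
    calc P t n ≤ ∏ u ∈ Finset.Icc (t - (n : ℤ)) t, r := by
          apply Finset.prod_le_prod (fun u _ => (inv_pos.mpr (hpos u)).le)
          intro u _
          exact inv_anti₀ h1cm (by have := hc u; linarith)
      _ = r ^ (n + 1) := by rw [Finset.prod_const, hcard]
  have hterm : ∀ t n, |P t n * f (t - (n:ℤ))| ≤ (C * r) * r ^ n := by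
    intro t n
    rw [abs_mul, abs_of_pos (hPpos t n)]
    calc P t n * |f (t - n)| ≤ r ^ (n + 1) * C := by
          apply mul_le_mul (hPle t n) (hf _) (abs_nonneg _) (by positivity)
      _ = (C * r) * r ^ n := by ring
  have hgeom : Summable (fun n : ℕ => (C * r) * r ^ n) :=
    (summable_geometric_of_lt_one hrpos.le hrlt).mul_left _
  have hsum : ∀ t, Summable (fun n : ℕ => |P t n * f (t - (n:ℤ))|) := fun t =>
    Summable.of_nonneg_of_le (fun n => abs_nonneg _) (hterm t) hgeom
  have hsum' : ∀ t, Summable (fun n : ℕ => P t n * f (t - (n:ℤ))) := fun t =>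
    (hsum t).of_abs
  set x : ℤ → ℝ := fun t => ∑' n : ℕ, P t n * f (t - (n:ℤ)) with hxdef
  have hxbd : ∀ t, |x t| ≤ (C * r) * (1 - r)⁻¹ := by
    intro t
    have hn : Summable (fun n : ℕ => ‖P t n * f (t - (n:ℤ))‖) := by
      simpa only [Real.norm_eq_abs] using hsum t
    calc |x t| ≤ ∑' n : ℕ, |P t n * f (t - (n:ℤ))| := by
          simpa only [Real.norm_eq_abs] using norm_tsum_le_tsum_norm hn
      _ ≤ ∑' n : ℕ, (C * r) * r ^ n := Summable.tsum_le_tsum (hterm t) (hsum t) hgeom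
      _ = (C * r) * (1 - r)⁻¹ := by
          rw [tsum_mul_left, tsum_geometric_of_lt_one hrpos.le hrlt]
  have hxeq : ∀ t : ℤ, x t - x (t - 1) = -(c t) * x t + f t := by
    intro t
    have hne : (1 + c t) ≠ 0 := (hpos t).ne'
    have key : (1 + c t) * x t = f t + x (t - 1) := by
      have h1 : (1 + c t) * x t = ∑' n : ℕ, (1 + c t) * (P t n * f (t - (n:ℤ))) := by
        rw [hxdef]; exact (tsum_mul_left).symm
      have h2 : ∀ n : ℕ, (1 + c t) * (P t (n + 1) * f (t - ((n:ℕ) + 1 : ℤ))) =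
          P (t - 1) n * f ((t - 1) - (n:ℤ)) := by
        intro n
        have hsplit : Finset.Icc (t - ((n:ℤ) + 1)) t =
            insert t (Finset.Icc ((t - 1) - (n:ℤ)) (t - 1)) := by
          ext u
          simp only [Finset.mem_insert, Finset.mem_Icc]
          omega
        have hnot : t ∉ Finset.Icc ((t - 1) - (n:ℤ)) (t - 1) := by
          simp only [Finset.mem_Icc]; omega
        have hP : P t (n + 1) = (1 + c t)⁻¹ * P (t - 1) n := by
          rw [hPdef]
          simp only
          rw [show (t - ((n:ℕ) + 1 : ℕ) : ℤ) = t - ((n:ℤ) + 1) by push_cast; ring, hsplit,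
            Finset.prod_insert hnot]
        rw [hP, show (t - ((n:ℕ) + 1 : ℤ)) = (t - 1) - (n:ℤ) by ring]
        field_simp
      have h3 : (1 + c t) * (P t 0 * f (t - ((0:ℕ):ℤ))) = f t := by
        have hP0 : P t 0 = (1 + c t)⁻¹ := by
          rw [hPdef]; simp
        rw [hP0, show ((0:ℕ):ℤ) = 0 from rfl, sub_zero, ← mul_assoc, mul_inv_cancel₀ hne, one_mul]
      rw [h1, Summable.tsum_eq_zero_add (by exact ((hsum' t).mul_left (1 + c t)))]
      simp only [Nat.cast_add, Nat.cast_one] at h2 ⊢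
      rw [h3]
      congr 1
      rw [hxdef]
      exact tsum_congr fun n => by rw [← h2 n]
    nlinarith [key]
  refine ⟨x, fun t => rfl, hsum, ⟨(C * r) * (1 - r)⁻¹, hxbd⟩, hxeq, ?_⟩
  -- uniqueness
  intro y ⟨Cy, hy⟩ heq
  set d : ℤ → ℝ := fun t => y t - x t with hd
  have hdeq : ∀ t, d (t - 1) = (1 + c t) * d t := by
    intro t
    have h1 := heq t
    have h2 := hxeq t
    simp only [hd]
    nlinarith [h1, h2]
  have hdle : ∀ t, |d t| ≤ r * |d (t - 1)| := by
    intro t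
    have hstep : (1 + cm) * |d t| ≤ |d (t - 1)| := by
      rw [hdeq t, abs_mul, abs_of_pos (hpos t)]
      nlinarith [abs_nonneg (d t), hc t]
    rw [hrdef, le_inv_mul_iff₀ h1cm]
    exact hstep
  have hbound : ∀ n : ℕ, ∀ t, |d t| ≤ r ^ n * (Cy + ((C * r) * (1 - r)⁻¹)) := by
    intro n
    induction n with
    | zero =>
        intro t
        simp only [pow_zero, one_mul, hd]
        calc |y t - x t| ≤ |y t| + |x t| := abs_sub _ _
          _ ≤ Cy + ((C * r) * (1 - r)⁻¹) := add_le_add (hy t) (hxbd t)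
    | succ n ih =>
        intro t
        calc |d t| ≤ r * |d (t - 1)| := hdle t
          _ ≤ r * (r ^ n * (Cy + ((C * r) * (1 - r)⁻¹))) :=
              mul_le_mul_of_nonneg_left (ih (t - 1)) hrpos.le
          _ = r ^ (n + 1) * (Cy + ((C * r) * (1 - r)⁻¹)) := by ring
  have hd0 : ∀ t, d t = 0 := by
    intro t
    have hlim : Filter.Tendsto (fun n : ℕ => r ^ n * (Cy + ((C * r) * (1 - r)⁻¹)))
        Filter.atTop (nhds 0) := by
      simpa using (tendsto_pow_atTop_nhds_zero_of_lt_one hrpos.le hrlt).mul_const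
        (Cy + ((C * r) * (1 - r)⁻¹))
    have h1 : |d t| ≤ 0 := ge_of_tendsto' hlim fun n => hbound n t
    exact abs_eq_zero.mp (le_antisymm h1 (abs_nonneg _))
  funext t
  have := hd0 t
  simp only [hd] at this
  linarith
end
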